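/- arXiv:1607.01951 — 12 statements merged into one kernel-verified Lean document; each statement's English description precedes it below -/
import Mathlib

section
/- If gcd(r,s) = 1 and n ≥ 1, then the cyclically presented group G_n(x_0^r x_1^{-s}), defined by generators x_0,...,x_{n-1} and relations x_i^r = x_{i+1}^s (subscripts mod n), is cyclic of order |r^n - s^n|, generated by any single generator x_i. -/
private lemma aux_chain {n : ℕ} {r s : ℤ} {G : Type*} [Group G] (x : ZMod n → G)
    (hrel : ∀ i : ZMod n, x i ^ r = x (i + 1) ^ s) :
    ∀ (k : ℕ) (i : ZMod n), x i ^ (r ^ k) = x (i + (k : ZMod n)) ^ (s ^ k) := by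
  intro k
  induction k with
  | zero => intro i; simp
  | succ k ih =>
    intro i
    have hidx : i + 1 + (k : ZMod n) = i + ((k + 1 : ℕ) : ZMod n) := by push_cast; ring
    calc x i ^ r ^ (k + 1) = (x i ^ r) ^ r ^ k := by rw [pow_succ', zpow_mul]
      _ = (x (i + 1) ^ r ^ k) ^ s := by
            rw [hrel i, ← zpow_mul, mul_comm, zpow_mul]
      _ = (x (i + 1 + (k : ZMod n)) ^ s ^ k) ^ s := by rw [ih]
      _ = x (i + ((k + 1 : ℕ) : ZMod n)) ^ s ^ (k + 1) := by
            rw [hidx, ← zpow_mul, ← pow_succ]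

/-- If gcd(r,s) = 1 and n ≥ 1, the cyclically presented group G_n(x₀ʳ x₁⁻ˢ), with
generators x_i (i ∈ ℤ/n) and relations x_iʳ = x_{i+1}ˢ, is cyclic of order |rⁿ - sⁿ|,
generated by any single generator x_i. -/
theorem stmt_0 (n : ℕ) (hn : 1 ≤ n) (r s : ℤ) (hrs : IsCoprime r s)
    (rels : Set (FreeGroup (ZMod n)))
    (hrels : rels = {w | ∃ i : ZMod n,
      w = FreeGroup.of i ^ r * FreeGroup.of (i + 1) ^ (-s)}) :
    IsCyclic (PresentedGroup rels) ∧
    Nat.card (PresentedGroup rels) = (r ^ n - s ^ n).natAbs ∧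
    ∀ i : ZMod n, Subgroup.zpowers (PresentedGroup.of i : PresentedGroup rels) = ⊤ := by
  haveI : NeZero n := ⟨by omega⟩
  set x : ZMod n → PresentedGroup rels := fun i => PresentedGroup.of i with hxdef
  -- the defining relations
  have hrel : ∀ i : ZMod n, x i ^ r = x (i + 1) ^ s := by
    intro i
    have hw : FreeGroup.of i ^ r * FreeGroup.of (i + 1) ^ (-s) ∈ rels := by
      rw [hrels]; exact ⟨i, rfl⟩
    have h1 : PresentedGroup.mk rels (FreeGroup.of i ^ r * FreeGroup.of (i + 1) ^ (-s)) = 1 :=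
      (QuotientGroup.eq_one_iff _).2 (Subgroup.subset_normalClosure hw)
    rw [map_mul, map_zpow, map_zpow, zpow_neg] at h1
    exact mul_inv_eq_one.mp h1
  have hchain := aux_chain x hrel
  have hMzero : ∀ i : ZMod n, x i ^ (r ^ n - s ^ n) = 1 := by
    intro i
    have h := hchain n i
    rw [ZMod.natCast_self, add_zero] at h
    rw [zpow_sub, h, mul_inv_cancel]
  -- each generator generates the next one
  have hstep : ∀ i : ZMod n, x (i + 1) ∈ Subgroup.zpowers (x i) := by
    intro i
    obtain ⟨a, b, hab⟩ := (hrs.symm.pow_right (n := n - 1))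
    have h1 : x (i + 1) ^ s = x i ^ r := (hrel i).symm
    have h2 : x (i + 1) ^ (r ^ (n - 1)) = x i ^ (s ^ (n - 1)) := by
      have h := hchain (n - 1) (i + 1)
      have hidx : i + 1 + ((n - 1 : ℕ) : ZMod n) = i := by
        have hc : (((n - 1 : ℕ) : ZMod n)) + 1 = 0 := by
          have h' : ((n - 1 : ℕ) + 1 : ℕ) = n := by omega
          calc ((n - 1 : ℕ) : ZMod n) + 1 = (((n - 1) + 1 : ℕ) : ZMod n) := by push_cast; ring
            _ = 0 := by rw [h', ZMod.natCast_self]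
        calc i + 1 + ((n - 1 : ℕ) : ZMod n) = i + (((n - 1 : ℕ) : ZMod n) + 1) := by ring
          _ = i := by rw [hc, add_zero]
      rwa [hidx] at h
    rw [Subgroup.mem_zpowers_iff]
    refine ⟨r * a + s ^ (n - 1) * b, ?_⟩
    calc x i ^ (r * a + s ^ (n - 1) * b)
        = (x i ^ r) ^ a * (x i ^ (s ^ (n - 1))) ^ b := by rw [zpow_add, zpow_mul, zpow_mul]
      _ = (x (i + 1) ^ s) ^ a * (x (i + 1) ^ (r ^ (n - 1))) ^ b := by rw [h1, h2]
      _ = x (i + 1) ^ (a * s + b * r ^ (n - 1)) := by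
            rw [← zpow_mul, ← zpow_mul, ← zpow_add]
            congr 1
            ring
      _ = x (i + 1) := by rw [hab, zpow_one]
  have hmem : ∀ i j : ZMod n, x j ∈ Subgroup.zpowers (x i) := by
    intro i j
    have key : ∀ k : ℕ, x (i + (k : ZMod n)) ∈ Subgroup.zpowers (x i) := by
      intro k
      induction k with
      | zero => simp only [Nat.cast_zero, add_zero]; exact Subgroup.mem_zpowers (x i)
      | succ k ih =>
        obtain ⟨t, ht⟩ := Subgroup.mem_zpowers_iff.mp ih
        obtain ⟨u, hu⟩ := Subgroup.mem_zpowers_iff.mp (hstep (i + (k : ZMod n)))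
        have hidx : i + ((k + 1 : ℕ) : ZMod n) = i + (k : ZMod n) + 1 := by push_cast; ring
        rw [Subgroup.mem_zpowers_iff]
        exact ⟨t * u, by rw [hidx, ← hu, ← ht, ← zpow_mul]⟩
    have h := key ((j - i).val)
    rwa [ZMod.natCast_rightInverse (j - i), add_sub_cancel] at h
  have htop : ∀ i : ZMod n, Subgroup.zpowers (x i) = ⊤ := by
    intro i
    rw [Subgroup.eq_top_iff']
    intro g
    exact PresentedGroup.generated_by rels _ (fun j => hmem i j) g
  -- the target cyclic group
  set M : ℤ := r ^ n - s ^ n with hMdef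
  set m : ℕ := M.natAbs with hmdef
  have hns : n - 1 + 1 = n := by omega
  have hcopsM : IsCoprime s M := by
    have h1 : IsCoprime s (r ^ n) := hrs.symm.pow_right
    have h2 : M = r ^ n + s * (-(s ^ (n - 1))) := by
      have hpow : s * s ^ (n - 1) = s ^ n := by rw [← pow_succ', hns]
      rw [hMdef, ← hpow]; ring
    rw [h2]
    exact h1.add_mul_left_right _
  have hcoprM : IsCoprime r M := by
    have h1 : IsCoprime r (-(s ^ n)) := (hrs.pow_right).neg_right
    have h2 : M = -(s ^ n) + r * r ^ (n - 1) := by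
      have hpow : r * r ^ (n - 1) = r ^ n := by rw [← pow_succ', hns]
      rw [hMdef, hpow]; ring
    rw [h2]
    exact h1.add_mul_left_right _
  have hunit : ∀ t : ℤ, IsCoprime t M → IsUnit ((t : ZMod m)) := by
    intro t ht
    have hg : Nat.Coprime t.natAbs m := Int.isCoprime_iff_gcd_eq_one.mp ht
    have h2 : IsUnit ((t.natAbs : ZMod m)) := (ZMod.isUnit_iff_coprime _ _).mpr hg
    rcases Int.natAbs_eq t with h | h
    · rw [h, Int.cast_natCast]; exact h2
    · rw [h, Int.cast_neg, Int.cast_natCast]; exact h2.neg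
  obtain ⟨su, hsu⟩ := hunit s hcopsM
  obtain ⟨ru, hru⟩ := hunit r hcoprM
  set u : (ZMod m)ˣ := ru * su⁻¹ with hudef
  have hMcast : ((M : ℤ) : ZMod m) = 0 := by
    rw [ZMod.intCast_zmod_eq_zero_iff_dvd]
    exact Int.natAbs_dvd.mpr dvd_rfl
  have hrscast : ((r : ZMod m)) ^ n = ((s : ZMod m)) ^ n := by
    have : ((r : ZMod m)) ^ n - ((s : ZMod m)) ^ n = 0 := by
      rw [hMdef] at hMcast; push_cast at hMcast; exact hMcast
    linear_combination this
  have hun : u ^ n = 1 := by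
    have h1 : ru ^ n = su ^ n := by
      apply Units.ext
      rw [Units.val_pow_eq_pow_val, Units.val_pow_eq_pow_val, hru, hsu]
      exact hrscast
    calc u ^ n = ru ^ n * (su ^ n)⁻¹ := by rw [hudef, mul_pow, inv_pow]
      _ = 1 := by rw [h1, mul_inv_cancel]
  have hus : (u : ZMod m) * (s : ZMod m) = (r : ZMod m) := by
    rw [← hsu, ← hru, hudef]
    calc ((ru * su⁻¹ : (ZMod m)ˣ) : ZMod m) * (su : ZMod m)
        = ((ru * su⁻¹ * su : (ZMod m)ˣ) : ZMod m) := by push_cast; ring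
      _ = (ru : ZMod m) := by rw [inv_mul_cancel_right]
  -- the homomorphism χ : ZMod n →+ Additive (ZMod m)ˣ
  have hcond : (zmultiplesHom (Additive (ZMod m)ˣ) (Additive.ofMul u)) (n : ℤ) = 0 := by
    rw [zmultiplesHom_apply]
    apply Additive.toMul.injective
    rw [toMul_zsmul, toMul_ofMul, zpow_natCast, hun, toMul_zero]
  set χ : ZMod n →+ Additive (ZMod m)ˣ := ZMod.lift n ⟨_, hcond⟩ with hχdef
  set c : ZMod n → ZMod m := fun i => ((Additive.toMul (χ i) : (ZMod m)ˣ) : ZMod m) with hcdef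
  have hc0 : c 0 = 1 := by
    rw [hcdef]
    simp only [map_zero, toMul_zero, Units.val_one]
  have hχ1 : Additive.toMul (χ 1) = u := by
    have h1 : (1 : ZMod n) = ((1 : ℤ) : ZMod n) := by push_cast; rfl
    rw [h1, hχdef, ZMod.lift_coe, zmultiplesHom_apply, one_zsmul, toMul_ofMul]
  have hcsucc : ∀ i : ZMod n, c (i + 1) = c i * (u : ZMod m) := by
    intro i
    rw [hcdef]
    simp only [map_add, toMul_add, Units.val_mul, hχ1]
  set f : ZMod n → Multiplicative (ZMod m) := fun i => Multiplicative.ofAdd (c i) with hfdef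
  have hφrel : ∀ w ∈ rels, FreeGroup.lift f w = 1 := by
    intro w hw
    rw [hrels] at hw
    obtain ⟨i, rfl⟩ := hw
    rw [map_mul, map_zpow, map_zpow, FreeGroup.lift_apply_of, FreeGroup.lift_apply_of, hfdef]
    simp only
    rw [← ofAdd_zsmul, ← ofAdd_zsmul, ← ofAdd_add]
    have hz : r • c i + (-s) • c (i + 1) = 0 := by
      rw [hcsucc i, zsmul_eq_mul, zsmul_eq_mul]
      push_cast
      linear_combination (-(c i)) * hus
    rw [hz, ofAdd_zero]
  set φ : PresentedGroup rels →* Multiplicative (ZMod m) := PresentedGroup.toGroup hφrel with hφdef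
  have hφx : ∀ i : ZMod n, φ (x i) = Multiplicative.ofAdd (c i) := by
    intro i
    rw [hφdef]
    exact PresentedGroup.toGroup.of hφrel
  have hφk : ∀ k : ℤ, φ (x 0 ^ k) = Multiplicative.ofAdd ((k : ZMod m)) := by
    intro k
    rw [map_zpow, hφx 0, hc0, ← ofAdd_zsmul, Int.smul_one_eq_cast]
  -- the inverse map ψ
  have hx0m : (zmultiplesHom (Additive (PresentedGroup rels)) (Additive.ofMul (x 0))) (m : ℤ) = 0 := by
    rw [zmultiplesHom_apply]
    apply Additive.toMul.injective
    rw [toMul_zsmul, toMul_ofMul, toMul_zero]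
    have h1 : x 0 ^ M = 1 := hMzero 0
    rcases Int.natAbs_eq M with h | h
    · rw [← hmdef] at h; rw [← h]; exact h1
    · have h2 : ((m : ℕ) : ℤ) = -M := by rw [hmdef]; omega
      rw [h2, zpow_neg, h1, inv_one]
  set ψ : ZMod m →+ Additive (PresentedGroup rels) := ZMod.lift m ⟨_, hx0m⟩ with hψdef
  have hψ : ∀ k : ℤ, Additive.toMul (ψ ((k : ZMod m))) = x 0 ^ k := by
    intro k
    rw [hψdef, ZMod.lift_coe, zmultiplesHom_apply, toMul_zsmul, toMul_ofMul]
  have hbij : Function.Bijective (fun cc : ZMod m => Additive.toMul (ψ cc)) := by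
    constructor
    · intro c1 c2 h
      obtain ⟨k1, rfl⟩ := ZMod.intCast_surjective c1
      obtain ⟨k2, rfl⟩ := ZMod.intCast_surjective c2
      simp only at h
      rw [hψ k1, hψ k2] at h
      have h2 := congrArg φ h
      rw [hφk k1, hφk k2] at h2
      exact Multiplicative.ofAdd.injective h2
    · intro g
      have hg : g ∈ Subgroup.zpowers (x 0) := by rw [htop 0]; trivial
      obtain ⟨k, hk⟩ := Subgroup.mem_zpowers_iff.mp hg
      exact ⟨((k : ZMod m)), by simp only; rw [hψ k]; exact hk⟩
  have hcard : Nat.card (PresentedGroup rels) = m := by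
    rw [← Nat.card_zmod m]
    exact (Nat.card_eq_of_bijective _ hbij).symm
  exact ⟨⟨⟨x 0, fun g => (Subgroup.eq_top_iff' _).mp (htop 0) g⟩⟩, hcard, htop⟩
end

section
/- Let n ≥ 1, gcd(r,s) = 1, α = |r^n - s^n|, and choose integers a, b with r^n·a + s·b = 1. Set μ = r(s^{n-1}·a + b). Then μ^n ≡ 1 (mod α). -/
/-- Let n ≥ 1, gcd(r,s) = 1, α = |rⁿ - sⁿ|, and a, b integers with rⁿ·a + s·b = 1.
Set μ = r(sⁿ⁻¹·a + b). Then μⁿ ≡ 1 (mod α). -/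
theorem stmt_1 (n : ℕ) (hn : 1 ≤ n) (r s a b : ℤ) (hrs : IsCoprime r s)
    (hab : r ^ n * a + s * b = 1) :
    (r * (s ^ (n - 1) * a + b)) ^ n ≡ 1 [ZMOD ((r ^ n - s ^ n).natAbs : ℤ)] := by
  obtain ⟨m, rfl⟩ : ∃ m, n = m + 1 := ⟨n - 1, by omega⟩
  set α : ℤ := ((r ^ (m + 1) - s ^ (m + 1)).natAbs : ℤ) with hαdef
  have hα : α ∣ (r ^ (m + 1) - s ^ (m + 1)) := Int.natAbs_dvd.mpr dvd_rfl
  have hα' : α ∣ (s ^ (m + 1) - r ^ (m + 1)) := by simpa using hα.neg_right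
  have hm : m + 1 - 1 = m := by omega
  rw [hm]
  set μ : ℤ := r * (s ^ m * a + b) with hμ
  -- s * μ ≡ r
  have h1 : s * μ ≡ r [ZMOD α] := by
    refine (Int.ModEq.symm (Int.modEq_iff_dvd.mpr ?_))
    have key : s * μ - r = (r * a) * (s ^ (m + 1) - r ^ (m + 1)) := by
      rw [hμ]; linear_combination r * hab
    rw [key]
    exact hα'.mul_left _
  -- rⁿ ≡ sⁿ
  have h2 : r ^ (m + 1) ≡ s ^ (m + 1) [ZMOD α] := (Int.modEq_iff_dvd.mpr hα).symm
  have h3 : s ^ (m + 1) * μ ^ (m + 1) ≡ s ^ (m + 1) * 1 [ZMOD α] := by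
    calc s ^ (m + 1) * μ ^ (m + 1)
        = (s * μ) ^ (m + 1) := (mul_pow s μ (m + 1)).symm
      _ ≡ r ^ (m + 1) [ZMOD α] := h1.pow _
      _ ≡ s ^ (m + 1) [ZMOD α] := h2
      _ = s ^ (m + 1) * 1 := by ring
  -- sⁿ is coprime to α, so cancel it
  have hcop : IsCoprime (s ^ (m + 1)) α := by
    have h4 : IsCoprime (s ^ (m + 1)) (r ^ (m + 1)) := (hrs.symm).pow
    have h5 : IsCoprime (s ^ (m + 1)) (r ^ (m + 1) - s ^ (m + 1)) := by
      have := h4.add_mul_left_right (-1)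
      simpa [mul_neg, sub_eq_add_neg] using this
    rcases Int.natAbs_eq (r ^ (m + 1) - s ^ (m + 1)) with h | h
    · rwa [hαdef, ← h]
    · rw [hαdef, show ((r ^ (m + 1) - s ^ (m + 1)).natAbs : ℤ)
          = -(r ^ (m + 1) - s ^ (m + 1)) from by linarith]
      exact h5.neg_right
  obtain ⟨u, v, huv⟩ := hcop
  have h6 : α ∣ s ^ (m + 1) * 1 - s ^ (m + 1) * μ ^ (m + 1) := h3.dvd
  rw [Int.modEq_iff_dvd]
  have key2 : 1 - μ ^ (m + 1) =
      u * (s ^ (m + 1) * 1 - s ^ (m + 1) * μ ^ (m + 1)) + (v * (1 - μ ^ (m + 1))) * α := by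
    linear_combination (μ ^ (m + 1) - 1) * huv
  rw [key2]
  exact dvd_add (h6.mul_left u) (Dvd.intro_left _ rfl)
end

section
/- Let m ≥ 1 and k be integers. If λ is a complex 4m-th root of unity, then 1 + λ^m - λ^k ≠ 0. -/
/-!
Put `μ = λ ^ m`. Then `μ ^ 4 = 1`, so `μ ∈ {1, -1, I, -I}` and `‖1 + μ‖ ∈ {2, 0, √2}`.
A vanishing `1 + λ ^ m - λ ^ k` would force `‖1 + μ‖ = ‖λ ^ k‖ = 1`, since `λ` lies on the unit circle.
-/

open Complex

lemma Complex.eq_one_or_neg_one_or_I_or_neg_I_of_pow_four_eq_one {μ : ℂ} (h : μ ^ 4 = 1) :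
    μ = 1 ∨ μ = -1 ∨ μ = I ∨ μ = -I := by
  have hfac : (μ - 1) * (μ + 1) * (μ - I) * (μ + I) = 0 := by
    linear_combination h + (1 - μ ^ 2) * I_sq
  simp only [mul_eq_zero, sub_eq_zero, add_eq_zero_iff_eq_neg] at hfac
  tauto

lemma Complex.norm_one_add_ne_one_of_pow_four_eq_one {μ : ℂ} (h : μ ^ 4 = 1) :
    ‖1 + μ‖ ≠ 1 := by
  rw [Ne, ← pow_eq_one_iff_of_nonneg (norm_nonneg _) two_ne_zero, Complex.sq_norm]
  rcases eq_one_or_neg_one_or_I_or_neg_I_of_pow_four_eq_one h with rfl | rfl | rfl | rfl <;>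
    norm_num [normSq_apply]

/-- If λ is a complex 4m-th root of unity (m ≥ 1, k an integer), then 1 + λ^m - λ^k ≠ 0. -/
theorem stmt_3 (m : ℕ) (hm : 1 ≤ m) (k : ℤ) (lam : ℂ) (hlam : lam ^ (4 * m) = 1) :
    1 + lam ^ m - lam ^ k ≠ 0 := by
  intro h
  have hnorm : ‖lam‖ = 1 := norm_eq_one_of_pow_eq_one hlam (by omega)
  have hμ : (lam ^ m) ^ 4 = 1 := by rw [← pow_mul, mul_comm, hlam]
  apply norm_one_add_ne_one_of_pow_four_eq_one hμ
  rw [sub_eq_zero.mp h, norm_zpow, hnorm, one_zpow]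
end

section
/- Let m ≥ 1 and k be integers. If λ is a complex 6m-th root of unity, then 1 + λ^m + λ^{2m} - λ^k - λ^{m+k} ≠ 0. -/
/-!
With `μ = λ ^ m` (a sixth root of unity) and `z = λ ^ k` (of modulus one) the expression is
`1 + μ + μ ^ 2 - z (1 + μ)`. Run through the four cyclotomic factors of `μ ^ 6 - 1`:
for `μ = 1` it is `3 - 2z`, for `μ = -1` it is `1`, for a primitive cube root it is `-z (1 + μ)`,
and for a primitive sixth root vanishing would force `4μ = 3z²`; none of these can be zero
when `|z| = 1`.
-/

lemma eq_or_cyclotomic_factor_of_pow_six_eq_one {μ : ℂ} (h : μ ^ 6 = 1) :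
    μ = 1 ∨ μ = -1 ∨ μ ^ 2 + μ + 1 = 0 ∨ μ ^ 2 - μ + 1 = 0 := by
  have hprod : (μ - 1) * (μ + 1) * (μ ^ 2 + μ + 1) * (μ ^ 2 - μ + 1) = 0 := by
    linear_combination h
  rcases mul_eq_zero.mp hprod with hprod | h6
  · rcases mul_eq_zero.mp hprod with hprod | h3
    · rcases mul_eq_zero.mp hprod with h1 | h2
      · exact .inl (sub_eq_zero.mp h1)
      · exact .inr (.inl (eq_neg_of_add_eq_zero_left h2))
    · exact .inr (.inr (.inl h3))
  · exact .inr (.inr (.inr h6))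

theorem one_add_add_sq_ne_mul_one_add {μ z : ℂ} (hμ : μ ^ 6 = 1) (hz : ‖z‖ = 1) :
    1 + μ + μ ^ 2 ≠ z * (1 + μ) := by
  intro h
  rcases eq_or_cyclotomic_factor_of_pow_six_eq_one hμ with rfl | rfl | h3 | h6
  · have h2z : (2 : ℂ) * z = 3 := by linear_combination -h
    have := congrArg norm h2z
    norm_num [hz] at this
  · norm_num at h
  · have hzμ : z * (1 + μ) = 0 := by linear_combination -h + h3
    have hz0 : z ≠ 0 := norm_ne_zero_iff.mp (by rw [hz]; exact one_ne_zero)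
    have hμ : 1 + μ = 0 := (mul_eq_zero.mp hzμ).resolve_left hz0
    rw [eq_neg_of_add_eq_zero_right hμ] at h3
    norm_num at h3
  · have hμ0 : μ ≠ 0 := by rintro rfl; norm_num at h6
    have key : 2 * μ = z * (1 + μ) := by linear_combination h - h6
    -- square `key` and use `(1 + μ) ^ 2 = 3μ`
    have h4 : 4 * μ = 3 * z ^ 2 := mul_right_cancel₀ hμ0 <| by
      linear_combination (2 * μ + z * (1 + μ)) * key + z ^ 2 * h6
    have := congrArg norm h4
    norm_num [hz, Complex.norm_eq_one_of_pow_eq_one hμ] at this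

/-- If λ is a complex 6m-th root of unity (m ≥ 1, k an integer), then
1 + λ^m + λ^{2m} - λ^k - λ^{m+k} ≠ 0. -/
theorem stmt_4 (m : ℕ) (hm : 1 ≤ m) (k : ℤ) (lam : ℂ) (hlam : lam ^ (6 * m) = 1) :
    1 + lam ^ m + lam ^ (2 * m) - lam ^ k - lam ^ ((m : ℤ) + k) ≠ 0 := by
  have hnorm : ‖lam‖ = 1 := Complex.norm_eq_one_of_pow_eq_one hlam (by omega)
  have hlam0 : lam ≠ 0 := norm_ne_zero_iff.mp (by rw [hnorm]; exact one_ne_zero)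
  have hμ : (lam ^ m) ^ 6 = 1 := by rw [← pow_mul, mul_comm, hlam]
  have hz : ‖lam ^ k‖ = 1 := by rw [norm_zpow, hnorm, one_zpow]
  rw [sub_sub, sub_ne_zero, zpow_add₀ hlam0, zpow_natCast, mul_comm 2 m, pow_mul]
  convert one_add_add_sq_ne_mul_one_add hμ hz using 1
  ring
end

section
/- For integers m ≥ 1 and k with gcd(m,k) = 1, the product over all complex λ with λ^{2m} = -1 of |1 + λ^m - λ^k| equals 2^m + 1 - 2·(√2)^m · cos((2k - m)π/4). -/
/-!
The roots of `X ^ (2m) + 1` are the `m`-th roots of `i` together with those of `-i`, and on the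
`m`-th roots of `a` the factor `1 + λ ^ m - λ ^ k` equals `(1 + a) - λ ^ k`. Since `k` is
invertible modulo `m`, `λ ↦ λ ^ k` permutes the `m`-th roots of `a` onto those of `a ^ k`, so
`∏ ((1 + a) - λ ^ k) = (1 + a) ^ m - a ^ k`. The two halves are complex conjugate, so the product
is `|(1 + i) ^ m - i ^ k| ^ 2`, which the law of cosines evaluates using
`1 + i = √2 · exp (iπ/4)` and `-i = exp (-iπ/2)`.
-/

open Polynomial Complex ComplexConjugate
open scoped Real

theorem IsCoprime.eq_of_zpow_eq_zpow {G₀ : Type*} [GroupWithZero G₀] {m k : ℤ}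
    (h : IsCoprime m k) {x y : G₀} (hx : x ≠ 0) (hy : y ≠ 0) (hm : x ^ m = y ^ m)
    (hk : x ^ k = y ^ k) : x = y := by
  obtain ⟨u, v, huv⟩ := h
  have hdecomp : ∀ z : G₀, z ≠ 0 → z = (z ^ m) ^ u * (z ^ k) ^ v := fun z hz => by
    rw [← zpow_mul, ← zpow_mul, ← zpow_add₀ hz, mul_comm m, mul_comm k, huv, zpow_one]
  rw [hdecomp x hx, hdecomp y hy, hm, hk]

theorem Multiset.prod_map_norm {α β : Type*} [NormedField α] (s : Multiset β) (f : β → α) :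
    (s.map fun b => ‖f b‖).prod = ‖(s.map f).prod‖ := by
  simpa [Multiset.map_map] using (map_multiset_prod (normHom : α →*₀ ℝ) (s.map f)).symm

namespace IsPrimitiveRoot

variable {K : Type*} [Field K] {ζ : K} {m : ℕ} {a α : K}

theorem prod_nthRoots_sub (hζ : IsPrimitiveRoot ζ m) (hm : 0 < m) (hα : α ^ m = a) (x : K) :
    ((nthRoots m a).map (x - ·)).prod = x ^ m - a := by
  have h := (X_pow_sub_C_splits_of_isPrimitiveRoot hζ hα).eq_prod_roots_of_monic
    (monic_X_pow_sub_C a hm.ne')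
  simpa [eval_multiset_prod, Multiset.map_map, nthRoots] using (congrArg (eval x) h).symm

theorem nthRoots_map_zpow (hζ : IsPrimitiveRoot ζ m) {k : ℤ} (hmk : IsCoprime (m : ℤ) k)
    (hα : α ^ m = a) (ha : a ≠ 0) : (nthRoots m a).map (· ^ k) = nthRoots m (a ^ k) := by
  rcases m.eq_zero_or_pos with rfl | hm
  · simp
  have hne : ∀ x ∈ nthRoots m a, x ≠ 0 := fun x hx hx0 =>
    ha (by rw [← (mem_nthRoots hm).1 hx, hx0, zero_pow hm.ne'])
  have hsub : (nthRoots m a).map (· ^ k) ⊆ nthRoots m (a ^ k) := by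
    rintro _ hy
    obtain ⟨x, hx, rfl⟩ := Multiset.mem_map.1 hy
    rw [mem_nthRoots hm, ← (mem_nthRoots hm).1 hx, ← zpow_natCast, ← zpow_natCast,
      ← zpow_mul, ← zpow_mul, mul_comm]
  have hnodup : ((nthRoots m a).map (· ^ k)).Nodup :=
    (hζ.nthRoots_nodup ha).map_on fun x hx y hy hxy => hmk.eq_of_zpow_eq_zpow (hne x hx) (hne y hy)
      (by rw [zpow_natCast, zpow_natCast, (mem_nthRoots hm).1 hx, (mem_nthRoots hm).1 hy]) hxy
  refine Multiset.eq_of_le_of_card_le ((Multiset.le_iff_subset hnodup).2 hsub) ?_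
  classical
  rw [Multiset.card_map, hζ.card_nthRoots a, if_pos ⟨α, hα⟩]
  exact Polynomial.card_nthRoots m _

theorem prod_nthRoots_sub_zpow (hζ : IsPrimitiveRoot ζ m) (hm : 0 < m) {k : ℤ}
    (hmk : IsCoprime (m : ℤ) k) (hα : α ^ m = a) (ha : a ≠ 0) (x : K) :
    ((nthRoots m a).map fun y => x - y ^ k).prod = x ^ m - a ^ k := by
  have hαk : (α ^ k) ^ m = a ^ k := by
    rw [← hα, ← zpow_natCast, ← zpow_natCast, ← zpow_mul, ← zpow_mul, mul_comm]
  rw [← hζ.prod_nthRoots_sub hm hαk, ← hζ.nthRoots_map_zpow hmk hα ha, Multiset.map_map]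
  rfl

end IsPrimitiveRoot

theorem roots_X_pow_two_mul_add_one {m : ℕ} (hm : m ≠ 0) :
    (X ^ (2 * m) + C 1 : ℂ[X]).roots = nthRoots m I + nthRoots m (-I) := by
  have hfactor : (X ^ (2 * m) + C 1 : ℂ[X]) = (X ^ m - C I) * (X ^ m - C (-I)) := by
    have hI : (C I : ℂ[X]) ^ 2 = -C 1 := by rw [← C_pow, I_sq, C_neg]
    rw [mul_comm 2 m, pow_mul, C_neg]
    linear_combination hI
  rw [hfactor, roots_mul (mul_ne_zero (monic_X_pow_sub_C _ hm).ne_zero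
    (monic_X_pow_sub_C _ hm).ne_zero)]
  rfl

theorem prod_map_norm_one_add_pow_sub_zpow_nthRoots {m : ℕ} (hm : 0 < m) {k : ℤ}
    (hmk : IsCoprime (m : ℤ) k) {a : ℂ} (ha : a ≠ 0) :
    ((nthRoots m a).map fun z => ‖1 + z ^ m - z ^ k‖).prod = ‖(1 + a) ^ m - a ^ k‖ := by
  obtain ⟨α, hα⟩ := IsAlgClosed.exists_pow_nat_eq a hm
  calc ((nthRoots m a).map fun z => ‖1 + z ^ m - z ^ k‖).prod
      = ((nthRoots m a).map fun z => ‖1 + a - z ^ k‖).prod := by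
        congr 1
        exact Multiset.map_congr rfl fun z hz => by rw [(mem_nthRoots hm).1 hz]
    _ = ‖(1 + a) ^ m - a ^ k‖ := by
        rw [Multiset.prod_map_norm,
          (isPrimitiveRoot_exp m hm.ne').prod_nthRoots_sub_zpow hm hmk hα ha]

theorem one_add_I_eq_sqrt_two_mul_exp : (1 + I : ℂ) = √2 * exp (π / 4 * I) := by
  have hsq : ((√2 : ℝ) : ℂ) * (√2 : ℝ) = 2 := by
    norm_cast; exact Real.mul_self_sqrt zero_le_two
  have hπ : (π / 4 : ℂ) = ((π / 4 : ℝ) : ℂ) := by push_cast; rfl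
  rw [exp_mul_I, hπ, ← ofReal_cos, ← ofReal_sin, Real.cos_pi_div_four, Real.sin_pi_div_four]
  push_cast
  linear_combination (-(1 + I) / 2) * hsq

theorem re_one_add_I_pow_mul_neg_I_zpow (m : ℕ) (k : ℤ) :
    ((1 + I) ^ m * (-I) ^ k).re = √2 ^ m * Real.cos ((2 * k - m) * π / 4) := by
  rw [one_add_I_eq_sqrt_two_mul_exp, ← exp_neg_pi_div_two_mul_I, mul_pow, ← exp_nat_mul,
    ← exp_int_mul, mul_assoc, ← exp_add]
  have harg :
      (m : ℂ) * (π / 4 * I) + k * (-π / 2 * I) = (-((2 * k - m) * π / 4) : ℝ) * I := by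
    push_cast; ring
  rw [harg, ← ofReal_pow, re_ofReal_mul, exp_ofReal_mul_I_re, Real.cos_neg]

theorem norm_one_add_I_pow_sub_I_zpow_sq (m : ℕ) (k : ℤ) :
    ‖(1 + I) ^ m - I ^ k‖ ^ 2 = 2 ^ m + 1 - 2 * √2 ^ m * Real.cos ((2 * k - m) * π / 4) := by
  have hnormSq : normSq (1 + I) = 2 := by norm_num [normSq_apply]
  rw [Complex.sq_norm, normSq_sub, map_pow, hnormSq, map_zpow₀, normSq_I, one_zpow, map_zpow₀,
    conj_I, re_one_add_I_pow_mul_neg_I_zpow]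
  ring

/-- For m ≥ 1, gcd(m,k) = 1, the product over all complex λ with λ^{2m} = -1 of
|1 + λ^m - λ^k| equals 2^m + 1 - 2·(√2)^m·cos((2k-m)π/4). -/
theorem stmt_5 (m : ℕ) (hm : 1 ≤ m) (k : ℤ) (hmk : Int.gcd (m : ℤ) k = 1) :
    ((X ^ (2 * m) + C 1 : ℂ[X]).roots.map
      (fun lam => ‖1 + lam ^ m - lam ^ k‖)).prod
      = 2 ^ m + 1 - 2 * Real.sqrt 2 ^ m * Real.cos ((2 * (k : ℝ) - (m : ℝ)) * Real.pi / 4) := by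
  have hcop : IsCoprime (m : ℤ) k := Int.isCoprime_iff_gcd_eq_one.mpr hmk
  have hconj : (1 + -I) ^ m - (-I) ^ k = conj ((1 + I) ^ m - I ^ k) := by
    simp [map_zpow₀, sub_eq_add_neg]
  rw [roots_X_pow_two_mul_add_one (by omega), Multiset.map_add, Multiset.prod_add,
    prod_map_norm_one_add_pow_sub_zpow_nthRoots hm hcop I_ne_zero,
    prod_map_norm_one_add_pow_sub_zpow_nthRoots hm hcop (neg_ne_zero.2 I_ne_zero), hconj,
    norm_conj, ← sq, norm_one_add_I_pow_sub_I_zpow_sq]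
end

section
/- For integers m ≥ 1 and k with gcd(m,k) = 1, the product over all complex λ with λ^{3m} = -1 of |1 + λ^m + λ^{2m} - λ^k(1 + λ^m)| equals 3^m + 4^m - 2·(2√3)^m · cos((2k - m)π/6). -/
/-!
The roots of `X ^ (3m) + 1` are the `m`-th roots of the three cube roots `-1, ω, ω̄` of `-1`,
where `ω = exp (iπ/3)`. On the `m`-th roots `z` of a fixed `μ` the factor is
`(1 + μ + μ²) - (1 + μ) z ^ k`, and since `gcd (m, k) = 1` the powers `z ^ k` again run over all
`m`-th roots of `μ ^ k`; so these factors multiply to `(1 + μ + μ²) ^ m - (1 + μ) ^ m μ ^ k`.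
This is `1` for `μ = -1`, and the values at `ω` and `ω̄` are conjugate, so the product is
`‖(2ω) ^ m - (√3 exp (iπ/6)) ^ m ω ^ k‖ ²`, which the law of cosines evaluates.
-/

open Polynomial Complex ComplexConjugate
open scoped Real

local notation "ω" => Complex.exp (π / 3 * Complex.I)

theorem IsPrimitiveRoot.prod_nthRoots_sub_mul_zpow {K : Type*} [Field K] {n : ℕ} (hn : 0 < n)
    {ζ : K} (hζ : IsPrimitiveRoot ζ n) {k : ℤ} (hk : k.gcd n = 1) {α a : K} (hα : α ^ n = a)
    (A B : K) : ((nthRoots n a).map fun x => A - B * x ^ k).prod = A ^ n - B ^ n * a ^ k := by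
  have hprod := congrArg (eval A)
    (X_pow_sub_C_eq_prod (hζ.zpow_of_gcd_eq_one k hk) hn (rfl : (B * α ^ k) ^ n = _))
  rw [eval_sub, eval_pow, eval_X, eval_C, eval_prod] at hprod
  rw [hζ.nthRoots_eq hα, Multiset.map_map, ← Finset.range_val, ← Finset.prod_eq_multiset_prod,
    ← hα, ← zpow_natCast α, ← zpow_mul, mul_comm (n : ℤ), zpow_mul, zpow_natCast, ← mul_pow, hprod]
  refine Finset.prod_congr rfl fun t _ => ?_
  simp only [Function.comp_apply, eval_sub, eval_X, eval_C, mul_zpow, ← zpow_natCast, ← zpow_mul]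
  ring_nf

theorem Complex.norm_multiset_prod (s : Multiset ℂ) : ‖s.prod‖ = (s.map (‖·‖)).prod := by
  simpa [Multiset.map_map] using map_multiset_prod (normHom : ℂ →*₀ ℝ) s

theorem Complex.norm_mul_exp_sub_mul_exp_sq (a b α β : ℝ) :
    ‖a * exp (α * I) - b * exp (β * I)‖ ^ 2 = a ^ 2 + b ^ 2 - 2 * a * b * Real.cos (α - β) := by
  rw [Complex.sq_norm, normSq_apply]
  simp only [sub_re, sub_im, re_ofReal_mul, im_ofReal_mul, exp_ofReal_mul_I_re,
    exp_ofReal_mul_I_im, Real.cos_sub]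
  linear_combination a ^ 2 * Real.sin_sq_add_cos_sq α + b ^ 2 * Real.sin_sq_add_cos_sq β

theorem X_pow_three_mul_add_one_eq_mul {R : Type*} [CommRing R] {u v : R} (hadd : u + v = 1)
    (hmul : u * v = 1) (m : ℕ) :
    (X ^ (3 * m) + 1 : R[X]) = (X ^ m - C (-1)) * (X ^ m - C u) * (X ^ m - C v) := by
  have hadd' : C u + C v = 1 := by rw [← C_add, hadd, C_1]
  have hmul' : C u * C v = 1 := by rw [← C_mul, hmul, C_1]
  rw [pow_mul', C_neg, C_1]
  linear_combination (X ^ m + 1) * X ^ m * hadd' - (X ^ m + 1) * hmul'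

noncomputable def rootFactor (m : ℕ) (k : ℤ) (μ : ℂ) : ℂ := (1 + μ + μ ^ 2) ^ m - (1 + μ) ^ m * μ ^ k

theorem prod_norm_nthRoots {m : ℕ} (hm : 0 < m) {k : ℤ} (hk : k.gcd m = 1) (μ : ℂ) :
    ((nthRoots m μ).map fun z => ‖1 + z ^ m + z ^ (2 * m) - z ^ k * (1 + z ^ m)‖).prod
      = ‖rootFactor m k μ‖ := by
  obtain ⟨α, hα⟩ := IsAlgClosed.exists_pow_nat_eq μ hm
  rw [rootFactor, ← (isPrimitiveRoot_exp m hm.ne').prod_nthRoots_sub_mul_zpow hm hk hα,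
    norm_multiset_prod, Multiset.map_map]
  refine congrArg Multiset.prod (Multiset.map_congr rfl fun z hz => ?_)
  rw [Function.comp_apply, pow_mul', (mem_nthRoots hm).1 hz, mul_comm (z ^ k)]

theorem rootFactor_neg_one {m : ℕ} (hm : m ≠ 0) (k : ℤ) : rootFactor m k (-1) = 1 := by
  simp [rootFactor, zero_pow hm]

theorem rootFactor_conj (m : ℕ) (k : ℤ) (μ : ℂ) :
    rootFactor m k (conj μ) = conj (rootFactor m k μ) := by
  simp [rootFactor, map_zpow₀]

theorem sq_ofReal_sqrt_three : ((√3 : ℝ) : ℂ) ^ 2 = 3 := by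
  rw [← ofReal_pow, Real.sq_sqrt (by norm_num)]
  push_cast
  rfl

theorem exp_pi_div_three_mul_I : ω = 1 / 2 + √3 / 2 * I := by
  rw [exp_mul_I, show (π / 3 : ℂ) = (π / 3 : ℝ) by push_cast; rfl, ← ofReal_cos, ← ofReal_sin,
    Real.cos_pi_div_three, Real.sin_pi_div_three]
  push_cast
  ring

theorem exp_pi_div_six_mul_I : exp (π / 6 * I) = √3 / 2 + 1 / 2 * I := by
  rw [exp_mul_I, show (π / 6 : ℂ) = (π / 6 : ℝ) by push_cast; rfl, ← ofReal_cos, ← ofReal_sin,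
    Real.cos_pi_div_six, Real.sin_pi_div_six]
  push_cast
  ring

theorem exp_pi_div_three_add_conj : ω + conj ω = 1 := by
  rw [add_conj, exp_pi_div_three_mul_I]
  simp

theorem exp_pi_div_three_mul_conj : ω * conj ω = 1 := by
  rw [mul_conj, normSq_eq_norm_sq, show (π / 3 : ℂ) = (π / 3 : ℝ) by push_cast; rfl,
    norm_exp_ofReal_mul_I]
  simp

theorem one_add_exp_pi_div_three_add_sq : 1 + ω + ω ^ 2 = 2 * ω := by
  rw [exp_pi_div_three_mul_I]
  linear_combination (I ^ 2 / 4) * sq_ofReal_sqrt_three + (3 / 4) * I_sq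

theorem one_add_exp_pi_div_three : 1 + ω = √3 * exp (π / 6 * I) := by
  rw [exp_pi_div_three_mul_I, exp_pi_div_six_mul_I]
  linear_combination (-1 / 2 : ℂ) * sq_ofReal_sqrt_three

theorem roots_X_pow_three_mul_add_one {m : ℕ} (hm : 0 < m) :
    (X ^ (3 * m) + C 1 : ℂ[X]).roots = nthRoots m (-1) + nthRoots m ω + nthRoots m (conj ω) := by
  have hne (a : ℂ) : (X ^ m - C a : ℂ[X]) ≠ 0 := X_pow_sub_C_ne_zero hm a
  rw [C_1, X_pow_three_mul_add_one_eq_mul exp_pi_div_three_add_conj exp_pi_div_three_mul_conj,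
    roots_mul (mul_ne_zero (mul_ne_zero (hne _) (hne _)) (hne _)),
    roots_mul (mul_ne_zero (hne _) (hne _))]
  rfl

theorem norm_rootFactor_exp_pi_div_three_sq (m : ℕ) (k : ℤ) :
    ‖rootFactor m k ω‖ ^ 2 = 3 ^ m + 4 ^ m - 2 * (2 * √3) ^ m * Real.cos ((2 * k - m) * π / 6) := by
  have h : rootFactor m k ω = ↑(2 ^ m : ℝ) * exp (↑(m * (π / 3) : ℝ) * I)
      - ↑(√3 ^ m) * exp (↑(m * (π / 6) + k * (π / 3) : ℝ) * I) := by
    rw [rootFactor, one_add_exp_pi_div_three_add_sq, one_add_exp_pi_div_three, mul_pow, mul_pow,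
      ← exp_nat_mul, ← exp_nat_mul, ← exp_int_mul, mul_assoc, ← exp_add]
    push_cast
    ring_nf
  have h3 : (√3 ^ m) ^ 2 = (3 : ℝ) ^ m := by
    rw [← pow_mul, mul_comm, pow_mul, Real.sq_sqrt (by norm_num)]
  have h4 : ((2 : ℝ) ^ m) ^ 2 = 4 ^ m := by
    rw [← pow_mul, mul_comm, pow_mul]
    norm_num
  rw [h, norm_mul_exp_sub_mul_exp_sq, h3, h4, mul_pow, ← Real.cos_neg]
  ring_nf

/-- For m ≥ 1, gcd(m,k) = 1, the product over all complex λ with λ^{3m} = -1 of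
|1 + λ^m + λ^{2m} - λ^k(1 + λ^m)| equals 3^m + 4^m - 2·(2√3)^m·cos((2k-m)π/6). -/
theorem stmt_6 (m : ℕ) (hm : 1 ≤ m) (k : ℤ) (hmk : Int.gcd (m : ℤ) k = 1) :
    ((X ^ (3 * m) + C 1 : ℂ[X]).roots.map
      (fun lam => ‖(1 + lam ^ m + lam ^ (2 * m) - lam ^ k * (1 + lam ^ m))‖)).prod
      = 3 ^ m + 4 ^ m
        - 2 * (2 * Real.sqrt 3) ^ m * Real.cos ((2 * (k : ℝ) - (m : ℝ)) * Real.pi / 6) := by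
  have hk : k.gcd m = 1 := by rwa [Int.gcd_comm]
  rw [roots_X_pow_three_mul_add_one hm, Multiset.map_add, Multiset.map_add, Multiset.prod_add,
    Multiset.prod_add, prod_norm_nthRoots hm hk, prod_norm_nthRoots hm hk,
    prod_norm_nthRoots hm hk, rootFactor_neg_one (by omega), rootFactor_conj, norm_conj,
    ← norm_rootFactor_exp_pi_div_three_sq, norm_one, one_mul, sq]
end

section
/- For integers m ≥ 1 and k with gcd(m,k) = 1, the product over all complex λ with λ^{2m} = 1 of |1 + λ^m - λ^k| equals 2^m - 1. -/
open Polynomial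

/-!
The roots of `X ^ (2m) - 1` are the `m`-th roots of `1` and of `-1`. A root `λ` with `λ ^ m = -1`
contributes `|λ ^ k| = 1`. On the `m`-th roots of unity the factor is `|2 - λ ^ k|`, and since
`gcd(m, k) = 1` the map `λ ↦ λ ^ k` permutes them, so their product is
`|∏ (2 - λ)| = |2 ^ m - 1|`.
-/

theorem X_pow_two_mul_sub_one_eq {R : Type*} [CommRing R] (n : ℕ) :
    (X ^ (2 * n) - C 1 : R[X]) = (X ^ n - C 1) * (X ^ n - C (-1)) := by
  simp only [map_one, map_neg]
  ring

theorem roots_X_pow_two_mul_sub_one {R : Type*} [CommRing R] [IsDomain R] {n : ℕ} (hn : 0 < n) :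
    (X ^ (2 * n) - C 1 : R[X]).roots = nthRoots n 1 + nthRoots n (-1) := by
  rw [X_pow_two_mul_sub_one_eq,
    roots_mul (mul_ne_zero (X_pow_sub_C_ne_zero hn _) (X_pow_sub_C_ne_zero hn _))]
  rfl

section Field

variable {K : Type*} [Field K]

theorem zpow_mem_nthRootsFinset_one {n : ℕ} (hn : 0 < n) {z : K}
    (hz : z ∈ nthRootsFinset n (1 : K)) (k : ℤ) : z ^ k ∈ nthRootsFinset n (1 : K) := by
  rw [mem_nthRootsFinset hn] at hz ⊢
  rw [← zpow_natCast, ← zpow_mul, mul_comm, zpow_mul, zpow_natCast, hz, one_zpow]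

theorem zpow_zpow_eq_self_of_pow_eq_one {n : ℕ} (hn : 0 < n) {z : K} (hz : z ^ n = 1)
    {u v k : ℤ} (h : u * n + v * k = 1) : (z ^ k) ^ v = z := by
  have hz0 : z ≠ 0 := by
    rintro rfl
    simp [zero_pow hn.ne'] at hz
  calc (z ^ k) ^ v = (z ^ (n : ℤ)) ^ u * (z ^ k) ^ v := by
        rw [zpow_natCast, hz, one_zpow, one_mul]
    _ = z := by rw [← zpow_mul, ← zpow_mul, ← zpow_add₀ hz0, mul_comm, mul_comm k, h, zpow_one]

theorem prod_nthRootsFinset_one_comp_zpow {M : Type*} [CommMonoid M] {n : ℕ} {k : ℤ}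
    (hnk : IsCoprime (n : ℤ) k) (f : K → M) :
    ∏ z ∈ nthRootsFinset n (1 : K), f (z ^ k) = ∏ z ∈ nthRootsFinset n (1 : K), f z := by
  obtain rfl | hn := n.eq_zero_or_pos
  · simp
  obtain ⟨u, v, huv⟩ := hnk
  refine Finset.prod_nbij' (· ^ k) (· ^ v) (fun z hz => zpow_mem_nthRootsFinset_one hn hz k)
    (fun z hz => zpow_mem_nthRootsFinset_one hn hz v) (fun z hz => ?_) (fun z hz => ?_)
    fun _ _ => rfl
  · exact zpow_zpow_eq_self_of_pow_eq_one hn ((mem_nthRootsFinset hn 1).1 hz) huv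
  · exact zpow_zpow_eq_self_of_pow_eq_one hn ((mem_nthRootsFinset hn 1).1 hz)
      (u := u) (by linear_combination huv)

end Field

theorem IsPrimitiveRoot.prod_nthRootsFinset_one_sub {R : Type*} [CommRing R] [IsDomain R]
    {ζ : R} {n : ℕ} (hζ : IsPrimitiveRoot ζ n) (hn : 0 < n) (x : R) :
    ∏ z ∈ nthRootsFinset n (1 : R), (x - z) = x ^ n - 1 := by
  simpa [eval_prod] using congrArg (eval x) (X_pow_sub_one_eq_prod hn hζ).symm

theorem Complex.norm_eq_one_of_mem_nthRoots {n : ℕ} {a z : ℂ} (ha : ‖a‖ = 1)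
    (hz : z ∈ nthRoots n a) : ‖z‖ = 1 := by
  obtain rfl | hn := n.eq_zero_or_pos
  · simp at hz
  refine (pow_eq_one_iff_of_nonneg (norm_nonneg z) hn.ne').1 ?_
  rw [← norm_pow, (mem_nthRoots hn).1 hz, ha]

/-- For m ≥ 1, gcd(m,k) = 1, the product over all complex λ with λ^{2m} = 1 of
|1 + λ^m - λ^k| equals 2^m - 1. -/
theorem stmt_7 (m : ℕ) (hm : 1 ≤ m) (k : ℤ) (hmk : Int.gcd (m : ℤ) k = 1) :
    ((X ^ (2 * m) - C 1 : ℂ[X]).roots.map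
      (fun lam => ‖1 + lam ^ m - lam ^ k‖)).prod
      = 2 ^ m - 1 := by
  have hprim := Complex.isPrimitiveRoot_exp m (by omega)
  rw [roots_X_pow_two_mul_sub_one hm, Multiset.map_add, Multiset.prod_add]
  have h_neg : ((nthRoots m (-1 : ℂ)).map fun lam => ‖1 + lam ^ m - lam ^ k‖).prod = 1 := by
    refine Multiset.prod_eq_one fun r hr => ?_
    obtain ⟨z, hz, rfl⟩ := Multiset.mem_map.1 hr
    rw [(mem_nthRoots hm).1 hz, add_neg_cancel, zero_sub, norm_neg, norm_zpow,
      Complex.norm_eq_one_of_mem_nthRoots (by simp) hz, one_zpow]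
  have h_one : nthRoots m (1 : ℂ) = (nthRootsFinset m (1 : ℂ)).val := by
    classical rw [nthRootsFinset_def, Multiset.toFinset_val, hprim.nthRoots_one_nodup.dedup]
  rw [h_neg, mul_one, h_one, ← Finset.prod_eq_multiset_prod]
  calc ∏ z ∈ nthRootsFinset m (1 : ℂ), ‖1 + z ^ m - z ^ k‖
      = ∏ z ∈ nthRootsFinset m (1 : ℂ), ‖2 - z ^ k‖ :=
        Finset.prod_congr rfl fun z hz => by rw [(mem_nthRootsFinset hm 1).1 hz]; norm_num
    _ = ∏ z ∈ nthRootsFinset m (1 : ℂ), ‖2 - z‖ :=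
        prod_nthRootsFinset_one_comp_zpow (Int.isCoprime_iff_gcd_eq_one.2 hmk) fun z => ‖2 - z‖
    _ = ‖(2 : ℂ) ^ m - 1‖ := by rw [← norm_prod, hprim.prod_nthRootsFinset_one_sub hm]
    _ = 2 ^ m - 1 := by
        rw [show (2 : ℂ) ^ m - 1 = ((2 ^ m - 1 : ℝ) : ℂ) by push_cast; rfl, Complex.norm_real,
          Real.norm_of_nonneg (sub_nonneg.2 (one_le_pow₀ one_le_two))]
end

section
/- For integers m ≥ 1 and k with gcd(m,k) = 1, the product over all complex λ with λ^{3m} = 1 of |1 + λ^m + λ^{2m} - λ^k - λ^{m+k}| equals 3^m - 2^m. -/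
open Polynomial Finset

/-!
Put `ω = λ ^ m`, a cube root of unity; the factor is `(1 + ω + ω²) - λ ^ k (1 + ω)`.
If `ω ≠ 1` then `1 + ω + ω² = 0` and `|1 + ω| = |ω²| = 1`, so the factor has modulus one and only
the `m`-th roots of unity contribute, each with `|3 - 2 λ ^ k|`. As `gcd(m, k) = 1`, `λ ↦ λ ^ k`
permutes the `m`-th roots of unity, and `∏ (3 - 2 λ) = 3 ^ m - 2 ^ m` over them.
-/

lemma prod_map_roots_X_pow_sub_one {R M : Type*} [CommRing R] [IsDomain R] [CommMonoid M]
    {ζ : R} {n : ℕ} (hζ : IsPrimitiveRoot ζ n) (f : R → M) :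
    ((X ^ n - C 1 : R[X]).roots.map f).prod = ∏ x ∈ nthRootsFinset n (1 : R), f x := by
  classical
  rw [nthRootsFinset_def, Finset.prod_eq_multiset_prod, Multiset.toFinset_val,
    hζ.nthRoots_one_nodup.dedup]
  rfl

lemma nthRootsFinset_subset_of_dvd {R : Type*} [CommRing R] [IsDomain R] {m n : ℕ}
    (hn : 0 < n) (hmn : m ∣ n) : nthRootsFinset m (1 : R) ⊆ nthRootsFinset n (1 : R) := by
  obtain ⟨d, rfl⟩ := hmn
  intro x hx
  have hm : 0 < m := Nat.pos_of_mul_pos_right hn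
  rw [mem_nthRootsFinset hm] at hx
  rw [mem_nthRootsFinset hn, pow_mul, hx, one_pow]

lemma zpow_zpow_eq_self_of_pow_eq_one_s8 {G : Type*} [GroupWithZero G] {x : G} {n : ℕ}
    (hn : n ≠ 0) (hx : x ^ n = 1) {a b k : ℤ} (h : n * a + k * b = 1) : (x ^ k) ^ b = x := by
  have hx0 : x ≠ 0 := by rintro rfl; simp [hn] at hx
  calc (x ^ k) ^ b = (x ^ (n : ℤ)) ^ a * x ^ (k * b) := by
        rw [zpow_natCast, hx, one_zpow, one_mul, zpow_mul]
    _ = x := by rw [← zpow_mul, ← zpow_add₀ hx0, h, zpow_one]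

lemma zpow_mem_nthRootsFinset {K : Type*} [Field K] {n : ℕ} (hn : 0 < n) {x : K}
    (hx : x ∈ nthRootsFinset n (1 : K)) (k : ℤ) : x ^ k ∈ nthRootsFinset n (1 : K) := by
  rw [mem_nthRootsFinset hn] at hx ⊢
  rw [← zpow_natCast, zpow_comm, zpow_natCast, hx, one_zpow]

lemma prod_nthRootsFinset_comp_zpow {K M : Type*} [Field K] [CommMonoid M] {n : ℕ} (hn : 0 < n)
    {k : ℤ} (hk : Int.gcd n k = 1) (g : K → M) :
    ∏ x ∈ nthRootsFinset n (1 : K), g (x ^ k) = ∏ x ∈ nthRootsFinset n (1 : K), g x := by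
  have hbezout : (n : ℤ) * Int.gcdA n k + k * Int.gcdB n k = 1 := by
    rw [← Int.gcd_eq_gcd_ab, hk, Nat.cast_one]
  have hpow : ∀ x ∈ nthRootsFinset n (1 : K), x ^ n = 1 := fun x hx =>
    (mem_nthRootsFinset hn 1).1 hx
  exact prod_nbij' (· ^ k) (· ^ Int.gcdB n k) (fun x hx => zpow_mem_nthRootsFinset hn hx k)
    (fun x hx => zpow_mem_nthRootsFinset hn hx _)
    (fun x hx => zpow_zpow_eq_self_of_pow_eq_one_s8 hn.ne' (hpow x hx) hbezout)
    (fun x hx => zpow_zpow_eq_self_of_pow_eq_one_s8 hn.ne' (hpow x hx)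
      (by rwa [mul_comm (Int.gcdB _ _)]))
    fun _ _ => rfl

lemma one_add_add_sq_eq_zero {K : Type*} [Field K] {ω : K} (h3 : ω ^ 3 = 1) (h1 : ω ≠ 1) :
    1 + ω + ω ^ 2 = 0 := by
  have : (ω - 1) * (1 + ω + ω ^ 2) = 0 := by linear_combination h3
  exact (mul_eq_zero.1 this).resolve_left (sub_ne_zero.2 h1)

lemma one_add_pow_add_pow_sub_zpow_sub_zpow {K : Type*} [Field K] {x : K} (hx : x ≠ 0)
    (m : ℕ) (k : ℤ) :
    1 + x ^ m + x ^ (2 * m) - x ^ k - x ^ ((m : ℤ) + k) =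
      (1 + x ^ m + (x ^ m) ^ 2) - x ^ k * (1 + x ^ m) := by
  rw [zpow_add₀ hx, zpow_natCast, mul_comm 2 m, pow_mul]
  ring

lemma norm_one_add_pow_add_pow_sub_zpow_sub_zpow_of_pow_ne_one {m : ℕ} {x : ℂ}
    (hx : x ^ (3 * m) = 1) (hxm : x ^ m ≠ 1) (k : ℤ) :
    ‖1 + x ^ m + x ^ (2 * m) - x ^ k - x ^ ((m : ℤ) + k)‖ = 1 := by
  have hm : 3 * m ≠ 0 := by
    intro h
    obtain rfl : m = 0 := by omega
    simp at hxm
  have hx1 : ‖x‖ = 1 := Complex.norm_eq_one_of_pow_eq_one hx hm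
  have hx0 : x ≠ 0 := by rintro rfl; simp at hx1
  have hω : 1 + x ^ m + (x ^ m) ^ 2 = 0 :=
    one_add_add_sq_eq_zero (by rw [← pow_mul, mul_comm, hx]) hxm
  rw [one_add_pow_add_pow_sub_zpow_sub_zpow hx0, hω, zero_sub, norm_neg, norm_mul, norm_zpow,
    hx1, one_zpow, one_mul, show 1 + x ^ m = -(x ^ m) ^ 2 by linear_combination hω, norm_neg,
    norm_pow, norm_pow, hx1, one_pow, one_pow]

lemma one_add_pow_add_pow_sub_zpow_sub_zpow_of_pow_eq_one {K : Type*} [Field K] {m : ℕ} {x : K}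
    (hx : x ^ m = 1) (hx0 : x ≠ 0) (k : ℤ) :
    1 + x ^ m + x ^ (2 * m) - x ^ k - x ^ ((m : ℤ) + k) = 3 - 2 * x ^ k := by
  rw [one_add_pow_add_pow_sub_zpow_sub_zpow hx0, hx]
  ring

/-- For m ≥ 1, gcd(m,k) = 1, the product over all complex λ with λ^{3m} = 1 of
|1 + λ^m + λ^{2m} - λ^k - λ^{m+k}| equals 3^m - 2^m. -/
theorem stmt_8 (m : ℕ) (hm : 1 ≤ m) (k : ℤ) (hmk : Int.gcd (m : ℤ) k = 1) :
    ((X ^ (3 * m) - C 1 : ℂ[X]).roots.map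
      (fun lam => ‖1 + lam ^ m + lam ^ (2 * m) - lam ^ k - lam ^ ((m : ℤ) + k)‖)).prod
      = 3 ^ m - 2 ^ m := by
  have h3m : 0 < 3 * m := by omega
  rw [prod_map_roots_X_pow_sub_one (Complex.isPrimitiveRoot_exp _ h3m.ne'),
    ← prod_subset (nthRootsFinset_subset_of_dvd h3m (dvd_mul_left m 3)) fun x hx hxm =>
      norm_one_add_pow_add_pow_sub_zpow_sub_zpow_of_pow_ne_one ((mem_nthRootsFinset h3m 1).1 hx)
        (by rwa [mem_nthRootsFinset hm] at hxm) k]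
  have hζ := Complex.isPrimitiveRoot_exp m (by omega)
  calc ∏ x ∈ nthRootsFinset m (1 : ℂ), ‖1 + x ^ m + x ^ (2 * m) - x ^ k - x ^ ((m : ℤ) + k)‖
      = ∏ x ∈ nthRootsFinset m (1 : ℂ), ‖3 - x ^ k * 2‖ := by
        refine prod_congr rfl fun x hx => ?_
        rw [one_add_pow_add_pow_sub_zpow_sub_zpow_of_pow_eq_one ((mem_nthRootsFinset hm 1).1 hx)
          (ne_zero_of_mem_nthRootsFinset one_ne_zero hx), mul_comm]
    _ = ‖∏ x ∈ nthRootsFinset m (1 : ℂ), (3 - x * 2)‖ := by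
        rw [prod_nthRootsFinset_comp_zpow hm hmk fun y => ‖3 - y * 2‖, norm_prod]
    _ = 3 ^ m - 2 ^ m := by
        rw [← hζ.pow_sub_pow_eq_prod_sub_mul _ _ hm]
        have h23 : (2 : ℝ) ^ m ≤ 3 ^ m := pow_le_pow_left₀ (by norm_num) (by norm_num) m
        rw [show (3 : ℂ) ^ m - 2 ^ m = ((3 ^ m - 2 ^ m : ℝ) : ℂ) by push_cast; rfl,
          Complex.norm_real, Real.norm_of_nonneg (sub_nonneg.2 h23)]
end

section
/- In the group J_4(m,k) = ⟨t, y | t^4, y^{m-k} t^3 y^k t^2⟩, the relation t^{-1} y^m t = y^{-k} t^{-1} y^k holds, and consequently y^{4m} = 1. -/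
lemma stmt_9_aux {G : Type*} [Group G] (t y : G) (m k : ℤ)
    (h1 : t ^ (4 : ℤ) = 1)
    (h2 : y ^ (m - k) * t ^ (3 : ℤ) * y ^ k * t ^ (2 : ℤ) = 1) :
    t⁻¹ * y ^ m * t = y ^ (-k) * t⁻¹ * y ^ k ∧ y ^ (4 * m) = 1 := by
  have e4 : t ^ (4 : ℤ) = t * t * t * t := by
    rw [show (4:ℤ) = 1+1+1+1 by norm_num, zpow_add, zpow_add, zpow_add, zpow_one]
  have e3 : t ^ (3 : ℤ) = t * t * t := by
    rw [show (3:ℤ) = 1+1+1 by norm_num, zpow_add, zpow_add, zpow_one]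
  have e2 : t ^ (2 : ℤ) = t * t := by
    rw [show (2:ℤ) = 1+1 by norm_num, zpow_add, zpow_one]
  rw [e4] at h1
  rw [e3, e2] at h2
  -- h1 : t*t*t*t = 1, h2 : y^(m-k) * (t*t*t) * y^k * (t*t) = 1
  have h3 : t * t * t = t⁻¹ := by
    calc t * t * t = (t * t * t * t) * t⁻¹ := by group
      _ = t⁻¹ := by rw [h1]; group
  rw [h3] at h2
  -- h2 : y^(m-k) * t⁻¹ * y^k * (t*t) = 1
  have hC : t * t = t⁻¹ * t⁻¹ := by
    calc t * t = (t * t * t * t) * (t⁻¹ * t⁻¹) := by (group; rw [e2])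
      _ = t⁻¹ * t⁻¹ := by rw [h1]; group
  have hA : y ^ (m - k) * t⁻¹ * y ^ k = t⁻¹ * t⁻¹ := by
    calc y ^ (m - k) * t⁻¹ * y ^ k
        = y ^ (m - k) * t⁻¹ * y ^ k * (t * t) * (t⁻¹ * t⁻¹) := by group
      _ = t⁻¹ * t⁻¹ := by rw [h2]; group
  have hB : y ^ (-k) * t * y ^ (k - m) = t * t := by
    calc y ^ (-k) * t * y ^ (k - m) = (y ^ (m - k) * t⁻¹ * y ^ k)⁻¹ := by group
      _ = (t⁻¹ * t⁻¹)⁻¹ := by rw [hA]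
      _ = t * t := by (group; rw [e2])
  have hT : y ^ m * t⁻¹ * y ^ m = t := by
    calc y ^ m * t⁻¹ * y ^ m
        = y ^ k * (y ^ (m - k) * t⁻¹ * y ^ k) * y ^ (m - k) := by group
      _ = y ^ k * (t⁻¹ * t⁻¹) * y ^ (m - k) := by rw [hA]
      _ = y ^ k * (t * t) * y ^ (m - k) := by rw [hC]
      _ = y ^ k * (y ^ (-k) * t * y ^ (k - m)) * y ^ (m - k) := by rw [hB]
      _ = t := by group
  have hTinv : t⁻¹ = y ^ (-m) * t * y ^ (-m) := by
    have h : t⁻¹ = (y ^ m * t⁻¹ * y ^ m)⁻¹ := by rw [hT]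
    rw [h]; group
  have hpart1 : t⁻¹ * y ^ m * t = y ^ (-k) * t⁻¹ * y ^ k := by
    have lhs : t⁻¹ * y ^ m * t = y ^ (-m) * (t * t) := by
      conv_lhs => rw [hTinv]
      group
    have rhs : y ^ (-k) * t⁻¹ * y ^ k = y ^ (-m) * (t⁻¹ * t⁻¹) := by
      calc y ^ (-k) * t⁻¹ * y ^ k
          = y ^ (-m) * (y ^ (m - k) * t⁻¹ * y ^ k) := by group
        _ = y ^ (-m) * (t⁻¹ * t⁻¹) := by rw [hA]
    rw [lhs, rhs, hC]
  refine ⟨hpart1, ?_⟩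
  have key : t⁻¹ * y ^ (4 * m) * t = 1 := by
    calc t⁻¹ * y ^ (4 * m) * t
        = (t⁻¹ * y ^ m * t) * (t⁻¹ * y ^ m * t) * (t⁻¹ * y ^ m * t) * (t⁻¹ * y ^ m * t) := by
          rw [show (4 : ℤ) * m = m + m + m + m by ring]; group
      _ = (y ^ (-k) * t⁻¹ * y ^ k) * (y ^ (-k) * t⁻¹ * y ^ k) * (y ^ (-k) * t⁻¹ * y ^ k) *
          (y ^ (-k) * t⁻¹ * y ^ k) := by rw [hpart1]
      _ = y ^ (-k) * (t * t * t * t)⁻¹ * y ^ k := by group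
      _ = 1 := by rw [h1]; group
  calc y ^ (4 * m) = t * (t⁻¹ * y ^ (4 * m) * t) * t⁻¹ := by group
    _ = 1 := by rw [key]; group

/-- In J₄(m,k) = ⟨t, y | t⁴, y^{m-k} t³ y^k t²⟩ the relation t⁻¹ y^m t = y⁻ᵏ t⁻¹ yᵏ holds,
and consequently y^{4m} = 1.  (Generators: `true ↦ t`, `false ↦ y`.) -/
theorem stmt_9 (m k : ℤ)
    (rels : Set (FreeGroup Bool))
    (hrels : rels = {FreeGroup.of true ^ (4 : ℤ),
      FreeGroup.of false ^ (m - k) * FreeGroup.of true ^ (3 : ℤ) *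
        FreeGroup.of false ^ k * FreeGroup.of true ^ (2 : ℤ)})
    (t y : PresentedGroup rels) (ht : t = PresentedGroup.of true)
    (hy : y = PresentedGroup.of false) :
    t⁻¹ * y ^ m * t = y ^ (-k) * t⁻¹ * y ^ k ∧ y ^ (4 * m) = 1 := by
  have hone : ∀ r ∈ rels, PresentedGroup.mk rels r = 1 := by
    intro r hr
    exact (QuotientGroup.eq_one_iff _).2 (Subgroup.subset_normalClosure hr)
  have h1 : t ^ (4 : ℤ) = 1 := by
    have := hone _ (by rw [hrels]; exact Set.mem_insert _ _)
    rw [map_zpow] at this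
    rw [ht]; exact this
  have h2 : y ^ (m - k) * t ^ (3 : ℤ) * y ^ k * t ^ (2 : ℤ) = 1 := by
    have := hone _ (by rw [hrels]; exact Set.mem_insert_iff.mpr (Or.inr rfl))
    rw [map_mul, map_mul, map_mul, map_zpow, map_zpow, map_zpow, map_zpow] at this
    rw [ht, hy]; exact this
  exact stmt_9_aux t y m k h1 h2
end

section
/- In the group J_6(m,k) = ⟨t, y | t^6, y^{m-k} t^3 y^k t^2⟩, the relation y^m t y^{-m} = t^{-1} y^m t holds, and consequently y^{6m} = 1. -/
lemma aux_j6 {G : Type*} [Group G] (t y : G) (m k : ℤ)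
    (h1 : t ^ (6:ℤ) = 1)
    (h2 : y ^ (m-k) * t ^ (3:ℤ) * y ^ k * t ^ (2:ℤ) = 1) :
    y ^ m * t * y ^ (-m) = t⁻¹ * y ^ m * t ∧ y ^ (6 * m) = 1 := by
  have hx2 : t ^ (3:ℤ) * t ^ (3:ℤ) = 1 := by rw [← h1]; group
  have hxinv : (t ^ (3:ℤ))⁻¹ = t ^ (3:ℤ) := inv_eq_of_mul_eq_one_right hx2
  have ht2 : t ^ (2:ℤ) = y ^ (-k) * t ^ (3:ℤ) * y ^ (k-m) := by
    have h : t ^ (2:ℤ) = y ^ (-k) * (t ^ (3:ℤ))⁻¹ * y ^ (k-m) *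
        (y ^ (m-k) * t ^ (3:ℤ) * y ^ k * t ^ (2:ℤ)) := by group
    rw [h2, mul_one, hxinv] at h
    exact h
  -- (t^3 y^{-m})^3 = 1, as an equation
  have hstar : t^(3:ℤ) * y^(-m) * t^(3:ℤ) * y^(-m) * t^(3:ℤ) * y^(-m) = 1 := by
    have h : y^k * (t^(2:ℤ) * t^(2:ℤ) * t^(2:ℤ)) * y^(-k)
        = t^(3:ℤ) * y^(-m) * t^(3:ℤ) * y^(-m) * t^(3:ℤ) * y^(-m) := by
      rw [ht2]; group
    rw [← h, show t^(2:ℤ)*t^(2:ℤ)*t^(2:ℤ) = t^(6:ℤ) from by group, h1]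
    group
  have h5 : t^(3:ℤ) * y^(-m) * t^(3:ℤ) * y^(-m) * t^(3:ℤ) = y^m := by
    have := mul_eq_one_iff_eq_inv.mp hstar
    rw [this]; group
  have hi' : t^(3:ℤ) * y^m * t^(3:ℤ) = y^(-m) * t^(3:ℤ) * y^(-m) := by
    calc t^(3:ℤ) * y^m * t^(3:ℤ)
        = t^(3:ℤ) * (t^(3:ℤ) * y^(-m) * t^(3:ℤ) * y^(-m) * t^(3:ℤ)) * t^(3:ℤ) := by rw [h5]
      _ = (t^(3:ℤ) * t^(3:ℤ)) * y^(-m) * t^(3:ℤ) * y^(-m) * (t^(3:ℤ) * t^(3:ℤ)) := by group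
      _ = y^(-m) * t^(3:ℤ) * y^(-m) := by rw [hx2]; group
  have hii : t^(3:ℤ) * y^(-m) * t^(3:ℤ) = y^m * t^(3:ℤ) * y^m := by
    have h : (t^(3:ℤ))⁻¹ * y^(-m) * (t^(3:ℤ))⁻¹ = y^m * (t^(3:ℤ))⁻¹ * y^m := by
      calc (t^(3:ℤ))⁻¹ * y^(-m) * (t^(3:ℤ))⁻¹ = (t^(3:ℤ) * y^m * t^(3:ℤ))⁻¹ := by group
        _ = (y^(-m) * t^(3:ℤ) * y^(-m))⁻¹ := by rw [hi']
        _ = y^m * (t^(3:ℤ))⁻¹ * y^m := by group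
    rw [hxinv] at h
    exact h
  have ht_eq1 : t = t^(3:ℤ) * y^(m-k) * t^(3:ℤ) * y^k := by
    calc t = t^(3:ℤ) * (t^(2:ℤ))⁻¹ := by group
      _ = t^(3:ℤ) * (y^(-k) * t^(3:ℤ) * y^(k-m))⁻¹ := by rw [ht2]
      _ = t^(3:ℤ) * y^(m-k) * (t^(3:ℤ))⁻¹ * y^k := by group
      _ = t^(3:ℤ) * y^(m-k) * t^(3:ℤ) * y^k := by rw [hxinv]
  have ht_eq2 : t = y^(m-k) * t^(3:ℤ) * y^k * t^(3:ℤ) := by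
    calc t = (t^(2:ℤ))⁻¹ * t^(3:ℤ) := by group
      _ = (y^(-k) * t^(3:ℤ) * y^(k-m))⁻¹ * t^(3:ℤ) := by rw [ht2]
      _ = y^(m-k) * (t^(3:ℤ))⁻¹ * y^k * t^(3:ℤ) := by group
      _ = y^(m-k) * t^(3:ℤ) * y^k * t^(3:ℤ) := by rw [hxinv]
  have hinv1 : t⁻¹ = y^(-k) * t^(3:ℤ) * y^(k-m) * t^(3:ℤ) := by
    calc t⁻¹ = (t^(3:ℤ) * y^(m-k) * t^(3:ℤ) * y^k)⁻¹ := by rw [← ht_eq1]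
      _ = y^(-k) * (t^(3:ℤ))⁻¹ * y^(k-m) * (t^(3:ℤ))⁻¹ := by group
      _ = y^(-k) * t^(3:ℤ) * y^(k-m) * t^(3:ℤ) := by rw [hxinv]
  have hinv2 : t⁻¹ = t^(3:ℤ) * y^(-k) * t^(3:ℤ) * y^(k-m) := by
    calc t⁻¹ = (y^(m-k) * t^(3:ℤ) * y^k * t^(3:ℤ))⁻¹ := by rw [← ht_eq2]
      _ = (t^(3:ℤ))⁻¹ * y^(-k) * (t^(3:ℤ))⁻¹ * y^(k-m) := by group
      _ = t^(3:ℤ) * y^(-k) * t^(3:ℤ) * y^(k-m) := by rw [hxinv]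
  have hC : t^(3:ℤ)*y^(k-m)*t^(3:ℤ)*y^(m-k) = y^k*t^(3:ℤ)*y^(-k)*t^(3:ℤ) := by
    calc t^(3:ℤ)*y^(k-m)*t^(3:ℤ)*y^(m-k)
        = y^k * (y^(-k) * t^(3:ℤ) * y^(k-m) * t^(3:ℤ)) * y^(m-k) := by group
      _ = y^k * t⁻¹ * y^(m-k) := by rw [← hinv1]
      _ = y^k * (t^(3:ℤ) * y^(-k) * t^(3:ℤ) * y^(k-m)) * y^(m-k) := by rw [← hinv2]
      _ = y^k*t^(3:ℤ)*y^(-k)*t^(3:ℤ) := by group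
  have hgoal' : t^(3:ℤ)*y^(k-m)*t^(3:ℤ)*y^(-k)*t^(3:ℤ) = y^k*t^(3:ℤ)*y^(m-k)*t^(3:ℤ)*y^m := by
    calc t^(3:ℤ)*y^(k-m)*t^(3:ℤ)*y^(-k)*t^(3:ℤ)
        = (t^(3:ℤ)*y^(k-m)*t^(3:ℤ)*y^(m-k)) * (y^(-m) * t^(3:ℤ)) := by group
      _ = (y^k*t^(3:ℤ)*y^(-k)*t^(3:ℤ)) * (y^(-m) * t^(3:ℤ)) := by rw [hC]
      _ = y^k*t^(3:ℤ)*y^(-k) * (t^(3:ℤ)*y^(-m)*t^(3:ℤ)) := by group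
      _ = y^k*t^(3:ℤ)*y^(-k) * (y^m*t^(3:ℤ)*y^m) := by rw [hii]
      _ = y^k*t^(3:ℤ)*y^(m-k)*t^(3:ℤ)*y^m := by group
  have hmain : t * y^m * t = y^m * t * y^m := by
    have e : (y^(m-k)*t^(3:ℤ)*y^k*t^(3:ℤ)) * y^m * (t^(3:ℤ)*y^(m-k)*t^(3:ℤ)*y^k)
        = y^m * (t^(3:ℤ)*y^(m-k)*t^(3:ℤ)*y^k) * y^m := by
      calc (y^(m-k)*t^(3:ℤ)*y^k*t^(3:ℤ)) * y^m * (t^(3:ℤ)*y^(m-k)*t^(3:ℤ)*y^k)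
          = y^(m-k) * (t^(3:ℤ) * y^k) * (t^(3:ℤ)*y^m*t^(3:ℤ)) * (y^(m-k) * t^(3:ℤ)) * y^k := by
            group
        _ = y^(m-k) * (t^(3:ℤ) * y^k) * (y^(-m)*t^(3:ℤ)*y^(-m)) * (y^(m-k) * t^(3:ℤ)) * y^k := by
            rw [hi']
        _ = y^(m-k) * (t^(3:ℤ)*y^(k-m)*t^(3:ℤ)*y^(-k)*t^(3:ℤ)) * y^k := by group
        _ = y^(m-k) * (y^k*t^(3:ℤ)*y^(m-k)*t^(3:ℤ)*y^m) * y^k := by rw [hgoal']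
        _ = y^m * (t^(3:ℤ)*y^(m-k)*t^(3:ℤ)*y^k) * y^m := by group
    rw [← ht_eq2, ← ht_eq1] at e
    exact e
  have g1 : y^m * t * y^(-m) = t⁻¹ * y^m * t := by
    calc y^m*t*y^(-m) = t⁻¹*(t*y^m*t)*y^(-m) := by group
      _ = t⁻¹*(y^m*t*y^m)*y^(-m) := by rw [hmain]
      _ = t⁻¹*y^m*t := by group
  refine ⟨g1, ?_⟩
  have h6 : t⁻¹ * y^(6*m) * t = (t⁻¹*y^m*t)^(6:ℤ) := by
    calc t⁻¹ * y^(6*m) * t = t⁻¹ * (y^m)^(6:ℤ) * (t⁻¹)⁻¹ := by group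
      _ = (t⁻¹*y^m*(t⁻¹)⁻¹)^(6:ℤ) := conj_zpow.symm
      _ = (t⁻¹*y^m*t)^(6:ℤ) := by rw [inv_inv]
  rw [← g1] at h6
  have h7 : (y^m*t*y^(-m))^(6:ℤ) = y^m*t^(6:ℤ)*y^(-m) := by
    rw [zpow_neg]; exact conj_zpow
  rw [h7, h1] at h6
  have h8 : y^m*(1:G)*y^(-m) = 1 := by group
  rw [h8] at h6
  calc y^(6*m) = t*(t⁻¹*y^(6*m)*t)*t⁻¹ := by group
    _ = 1 := by rw [h6]; group


/-- In J₆(m,k) = ⟨t, y | t⁶, y^{m-k} t³ y^k t²⟩ the relation y^m t y^{-m} = t⁻¹ y^m t holds,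
and consequently y^{6m} = 1.  (Generators: `true ↦ t`, `false ↦ y`.) -/
theorem stmt_10 (m k : ℤ)
    (rels : Set (FreeGroup Bool))
    (hrels : rels = {FreeGroup.of true ^ (6 : ℤ),
      FreeGroup.of false ^ (m - k) * FreeGroup.of true ^ (3 : ℤ) *
        FreeGroup.of false ^ k * FreeGroup.of true ^ (2 : ℤ)})
    (t y : PresentedGroup rels) (ht : t = PresentedGroup.of true)
    (hy : y = PresentedGroup.of false) :
    y ^ m * t * y ^ (-m) = t⁻¹ * y ^ m * t ∧ y ^ (6 * m) = 1 := by
  have mem1 : (FreeGroup.of true ^ (6:ℤ)) ∈ rels := by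
    rw [hrels]; exact Set.mem_insert _ _
  have mem2 : (FreeGroup.of false ^ (m - k) * FreeGroup.of true ^ (3 : ℤ) *
      FreeGroup.of false ^ k * FreeGroup.of true ^ (2 : ℤ)) ∈ rels := by
    rw [hrels]; exact Set.mem_insert_of_mem _ rfl
  have h1 : t ^ (6:ℤ) = 1 := by
    rw [ht]
    have e : (PresentedGroup.of true : PresentedGroup rels) ^ (6:ℤ)
        = PresentedGroup.mk rels (FreeGroup.of true ^ (6:ℤ)) := by
      rw [map_zpow]; rfl
    rw [e]
    exact (QuotientGroup.eq_one_iff _).mpr (Subgroup.subset_normalClosure mem1)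
  have h2 : y ^ (m-k) * t ^ (3:ℤ) * y ^ k * t ^ (2:ℤ) = 1 := by
    rw [ht, hy]
    have e : (PresentedGroup.of false : PresentedGroup rels) ^ (m-k) *
        PresentedGroup.of true ^ (3:ℤ) * PresentedGroup.of false ^ k *
        PresentedGroup.of true ^ (2:ℤ)
        = PresentedGroup.mk rels (FreeGroup.of false ^ (m - k) * FreeGroup.of true ^ (3 : ℤ) *
            FreeGroup.of false ^ k * FreeGroup.of true ^ (2 : ℤ)) := by
      simp only [map_mul, map_zpow]; rfl
    rw [e]
    exact (QuotientGroup.eq_one_iff _).mpr (Subgroup.subset_normalClosure mem2)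
  exact aux_j6 t y m k h1 h2
end

section
/- For all integers m and k, the group J_4(m,k) = ⟨t, y | t^4, y^{m-k} t^3 y^k t^2⟩ is isomorphic to the group F^{m,k,m-k} = ⟨R, S | R^2, R S^m R S^k R S^{m-k}⟩. -/
/-!
Both presentations are related by the substitution `t ↦ R S⁻ᵐ`, `y ↦ S⁻¹`, whose inverse is
`R ↦ t y⁻ᵐ`, `S ↦ y⁻¹`. In `J₄(m,k)` the relators give `t y⁻ᵐ = yᵏ t² y⁻ᵏ`, so `t y⁻ᵐ` is an
involution, and the relator `R Sᵐ R Sᵏ R S^{m-k}` then collapses. Conversely, in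
`F^{m,k,m-k}` one gets `(R S⁻ᵐ)² = Sᵏ R S⁻ᵏ`, so `R S⁻ᵐ` has order dividing `4`, and the second
relator of `J₄(m,k)` becomes, using `R⁻¹ = R`, a conjugate of the inverse of the relator of
`F^{m,k,m-k}`.
-/

open PresentedGroup

namespace PresentedGroup

variable {α β : Type*} {rels₁ : Set (FreeGroup α)} {rels₂ : Set (FreeGroup β)}

def mulEquivOfSubst {f : α → PresentedGroup rels₂} {g : β → PresentedGroup rels₁}
    (hf : ∀ r ∈ rels₁, FreeGroup.lift f r = 1) (hg : ∀ r ∈ rels₂, FreeGroup.lift g r = 1)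
    (hgf : ∀ a, toGroup hg (f a) = of a) (hfg : ∀ b, toGroup hf (g b) = of b) :
    PresentedGroup rels₁ ≃* PresentedGroup rels₂ :=
  MonoidHom.toMulEquiv (toGroup hf) (toGroup hg)
    (ext fun a => by simp [toGroup.of, hgf]) (ext fun b => by simp [toGroup.of, hfg])

end PresentedGroup

section Relations

variable {G : Type*} [Group G] {m k : ℤ}

def IsJ4Pair (m k : ℤ) (t y : G) : Prop :=
  t ^ 4 = 1 ∧ y ^ (m - k) * t ^ 3 * y ^ k * t ^ 2 = 1

def IsFPair (a b c : ℤ) (r s : G) : Prop :=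
  r ^ 2 = 1 ∧ r * s ^ a * r * s ^ b * r * s ^ c = 1

theorem IsJ4Pair.mul_zpow_neg_eq_conj {t y : G} (h : IsJ4Pair m k t y) :
    t * y ^ (-m) = y ^ k * t ^ 2 * (y ^ k)⁻¹ := by
  obtain ⟨h4, hrel⟩ := h
  calc t * y ^ (-m)
      = t * (t ^ 4)⁻¹ * y ^ (k - m) * (y ^ (m - k) * t ^ 3 * y ^ k * t ^ 2) * (y ^ k)⁻¹ := by
        rw [h4, hrel]; group
    _ = y ^ k * t ^ 2 * (y ^ k)⁻¹ := by group

theorem IsJ4Pair.mul_zpow_neg_sq {t y : G} (h : IsJ4Pair m k t y) : (t * y ^ (-m)) ^ 2 = 1 := by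
  rw [h.mul_zpow_neg_eq_conj, conj_pow, ← pow_mul, h.1, mul_one, mul_inv_cancel]

theorem IsJ4Pair.isFPair {t y : G} (h : IsJ4Pair m k t y) :
    IsFPair m k (m - k) (t * y ^ (-m)) y⁻¹ := by
  have hsandwich : t * y ^ (-m) * t = y ^ m := by
    calc t * y ^ (-m) * t = (t * y ^ (-m)) ^ 2 * y ^ m := by rw [sq]; group
      _ = y ^ m := by rw [h.mul_zpow_neg_sq, one_mul]
  refine ⟨h.mul_zpow_neg_sq, ?_⟩
  calc t * y ^ (-m) * y⁻¹ ^ m * (t * y ^ (-m)) * y⁻¹ ^ k * (t * y ^ (-m)) * y⁻¹ ^ (m - k)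
      = (t * y ^ (-m) * t) * t⁻¹ * t⁻¹ * (t * y ^ (-m) * t) * y ^ (-m) * y ^ (-k) *
          (t * y ^ (-m)) * y ^ (k - m) := by group
    _ = y ^ m * t⁻¹ * t⁻¹ * y ^ m * y ^ (-m) * y ^ (-k) * (y ^ k * t ^ 2 * (y ^ k)⁻¹) *
          y ^ (k - m) := by rw [hsandwich, h.mul_zpow_neg_eq_conj]
    _ = 1 := by group

theorem IsFPair.inv_eq_self {a b c : ℤ} {r s : G} (h : IsFPair a b c r s) : r⁻¹ = r :=
  inv_eq_of_mul_eq_one_right (by rw [← sq, h.1])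

theorem IsFPair.mul_zpow_neg_sq {r s : G} (h : IsFPair m k (m - k) r s) :
    (r * s ^ (-m)) ^ 2 = s ^ k * r * (s ^ k)⁻¹ := by
  have hinv := h.inv_eq_self
  obtain ⟨-, hrel⟩ := h
  have hconj : r * s ^ (-m) * r = s ^ k * r * s ^ (m - k) := by
    calc r * s ^ (-m) * r = r⁻¹ * s ^ (-m) * r⁻¹ := by rw [hinv]
      _ = s ^ k * r * s ^ (m - k) * (r * s ^ m * r * s ^ k * r * s ^ (m - k))⁻¹ := by group
      _ = s ^ k * r * s ^ (m - k) := by rw [hrel, inv_one, mul_one]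
  calc (r * s ^ (-m)) ^ 2 = r * s ^ (-m) * r * s ^ (-m) := by rw [sq]; group
    _ = s ^ k * r * (s ^ k)⁻¹ := by rw [hconj]; group

theorem IsFPair.isJ4Pair {r s : G} (h : IsFPair m k (m - k) r s) :
    IsJ4Pair m k (r * s ^ (-m)) s⁻¹ := by
  have hinv := h.inv_eq_self
  constructor
  · rw [show 4 = 2 * 2 from rfl, pow_mul, h.mul_zpow_neg_sq, conj_pow, h.1, mul_one,
      mul_inv_cancel]
  calc s⁻¹ ^ (m - k) * (r * s ^ (-m)) ^ 3 * s⁻¹ ^ k * (r * s ^ (-m)) ^ 2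
      = s⁻¹ ^ (m - k) * (r * s ^ (-m)) * (r * s ^ (-m)) ^ 2 * s⁻¹ ^ k *
          (r * s ^ (-m)) ^ 2 := by rw [pow_succ' _ 2]; simp only [mul_assoc]
    _ = s ^ (k - m) * r⁻¹ * s ^ (k - m) * r⁻¹ * s ^ (-k) * r⁻¹ * s ^ (-k) := by
        rw [h.mul_zpow_neg_sq, hinv]; group
    _ = s ^ (k - m) * (r⁻¹ * (r * s ^ m * r * s ^ k * r * s ^ (m - k)) * r)⁻¹ * s ^ (m - k) := by
        group
    _ = 1 := by rw [h.2]; group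

end Relations

section Presentations

def j4Rels (m k : ℤ) : Set (FreeGroup Bool) :=
  {FreeGroup.of true ^ (4 : ℤ),
    FreeGroup.of false ^ (m - k) * FreeGroup.of true ^ (3 : ℤ) * FreeGroup.of false ^ k *
      FreeGroup.of true ^ (2 : ℤ)}

def fRels (a b c : ℤ) : Set (FreeGroup Bool) :=
  {FreeGroup.of true ^ (2 : ℤ),
    FreeGroup.of true * FreeGroup.of false ^ a * FreeGroup.of true * FreeGroup.of false ^ b *
      FreeGroup.of true * FreeGroup.of false ^ c}

variable {G : Type*} [Group G] {m k a b c : ℤ}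

theorem IsJ4Pair.lift_eq_one {t y : G} (h : IsJ4Pair m k t y) :
    ∀ r ∈ j4Rels m k, FreeGroup.lift (fun b => bif b then t else y) r = 1 := by
  simpa [j4Rels, IsJ4Pair, zpow_ofNat] using h

theorem IsFPair.lift_eq_one {r s : G} (h : IsFPair a b c r s) :
    ∀ x ∈ fRels a b c, FreeGroup.lift (fun b => bif b then r else s) x = 1 := by
  simpa [fRels, IsFPair, zpow_ofNat] using h

theorem isJ4Pair_of : IsJ4Pair m k (of true : PresentedGroup (j4Rels m k)) (of false) := by
  have h₁ := one_of_mem (rels := j4Rels m k) (Set.mem_insert _ _)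
  have h₂ := one_of_mem (rels := j4Rels m k) (Set.mem_insert_of_mem _ rfl)
  simp only [map_mul, map_zpow, zpow_ofNat] at h₁ h₂
  exact ⟨h₁, h₂⟩

theorem isFPair_of : IsFPair a b c (of true : PresentedGroup (fRels a b c)) (of false) := by
  have h₁ := one_of_mem (rels := fRels a b c) (Set.mem_insert _ _)
  have h₂ := one_of_mem (rels := fRels a b c) (Set.mem_insert_of_mem _ rfl)
  simp only [map_mul, map_zpow, zpow_ofNat] at h₁ h₂
  exact ⟨h₁, h₂⟩

def j4MulEquivF (m k : ℤ) : PresentedGroup (j4Rels m k) ≃* PresentedGroup (fRels m k (m - k)) :=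
  mulEquivOfSubst isFPair_of.isJ4Pair.lift_eq_one isJ4Pair_of.isFPair.lift_eq_one
    (by rintro (_ | _) <;> simp [toGroup.of]) (by rintro (_ | _) <;> simp [toGroup.of])

end Presentations

/-- For all integers m, k, the group J₄(m,k) = ⟨t, y | t⁴, y^{m-k} t³ y^k t²⟩ is isomorphic
to F^{m,k,m-k} = ⟨R, S | R², R Sᵐ R Sᵏ R S^{m-k}⟩.
(Generators: `true ↦ t` resp. `R`, `false ↦ y` resp. `S`.) -/
theorem stmt_12 (m k : ℤ)
    (rels₁ rels₂ : Set (FreeGroup Bool))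
    (h₁ : rels₁ = {FreeGroup.of true ^ (4 : ℤ),
      FreeGroup.of false ^ (m - k) * FreeGroup.of true ^ (3 : ℤ) *
        FreeGroup.of false ^ k * FreeGroup.of true ^ (2 : ℤ)})
    (h₂ : rels₂ = {FreeGroup.of true ^ (2 : ℤ),
      FreeGroup.of true * FreeGroup.of false ^ m * FreeGroup.of true * FreeGroup.of false ^ k *
        FreeGroup.of true * FreeGroup.of false ^ (m - k)}) :
    Nonempty (PresentedGroup rels₁ ≃* PresentedGroup rels₂) := by
  subst h₁ h₂
  exact ⟨j4MulEquivF m k⟩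
end

section
/- For all integers m and k, the group J_6(m,k) = ⟨t, y | t^6, y^{m-k} t^3 y^k t^2⟩ is isomorphic to the group ⟨R, S | R^2, R S^m (R S^k R S^{m-k})^2⟩. -/
/-!
The substitutions `R ↦ t³, S ↦ y` and `t ↦ S^(m-k) R S^k R, y ↦ S` are mutually inverse.
The relator `y^(m-k) t³ y^k t²` says `t³ y^k = y^(k-m) t⁻²`, which makes `R S^k R S^(m-k)` a
conjugate of `t` and yields the second relator. Conversely `w = S^(m-k) R S^k R` is a conjugate of
`R S^k R S^(m-k)`, so the second relator gives `w² = S^(-k) R S^(k-m)` and then `w³ = R`; with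
`R² = 1` this yields `w⁶ = 1` and the relator `S^(m-k) w³ S^k w²`.
-/

namespace PresentedGroup

variable {α β : Type*} {rels₁ : Set (FreeGroup α)} {rels₂ : Set (FreeGroup β)}

lemma lift_of_eq_one_of_mem {rels : Set (FreeGroup α)} {r : FreeGroup α} (hr : r ∈ rels) :
    FreeGroup.lift (of (rels := rels)) r = 1 := by
  rw [show FreeGroup.lift of = mk rels from FreeGroup.ext_hom _ _ fun _ => by simp; rfl]
  exact one_of_mem hr

def mulEquivOfLiftInverse (f : α → PresentedGroup rels₂) (g : β → PresentedGroup rels₁)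
    (hf : ∀ r ∈ rels₁, FreeGroup.lift f r = 1) (hg : ∀ r ∈ rels₂, FreeGroup.lift g r = 1)
    (hgf : ∀ a, toGroup hg (f a) = of a) (hfg : ∀ b, toGroup hf (g b) = of b) :
    PresentedGroup rels₁ ≃* PresentedGroup rels₂ :=
  MonoidHom.toMulEquiv (toGroup hf) (toGroup hg)
    (ext fun a => by simp [toGroup.of, hgf]) (ext fun b => by simp [toGroup.of, hfg])

end PresentedGroup

namespace J6

variable {G : Type*} [Group G] {m k : ℤ}

section Cube

variable {t y : G} (h : y ^ (m - k) * t ^ (3 : ℤ) * y ^ k * t ^ (2 : ℤ) = 1)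
include h

lemma cube_mul_zpow_eq : t ^ (3 : ℤ) * y ^ k = y ^ (k - m) * t ^ (-2 : ℤ) :=
  calc t ^ (3 : ℤ) * y ^ k
      = y ^ (k - m) * (y ^ (m - k) * t ^ (3 : ℤ) * y ^ k * t ^ (2 : ℤ)) * t ^ (-2 : ℤ) := by group
    _ = y ^ (k - m) * t ^ (-2 : ℤ) := by rw [h]; group

lemma cube_relator_eq_one :
    t ^ (3 : ℤ) * y ^ m * (t ^ (3 : ℤ) * y ^ k * t ^ (3 : ℤ) * y ^ (m - k)) ^ 2 = 1 :=
  calc t ^ (3 : ℤ) * y ^ m * (t ^ (3 : ℤ) * y ^ k * t ^ (3 : ℤ) * y ^ (m - k)) ^ 2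
      = t ^ (3 : ℤ) * y ^ k * y ^ (m - k) * (t ^ (3 : ℤ) * y ^ k * t ^ (3 : ℤ) * y ^ (m - k)) *
          (t ^ (3 : ℤ) * y ^ k * t ^ (3 : ℤ) * y ^ (m - k)) := by rw [pow_two]; group
    _ = 1 := by rw [cube_mul_zpow_eq h]; group

lemma word_of_cube_eq_self : y ^ (m - k) * t ^ (3 : ℤ) * y ^ k * t ^ (3 : ℤ) = t :=
  calc y ^ (m - k) * t ^ (3 : ℤ) * y ^ k * t ^ (3 : ℤ)
      = y ^ (m - k) * (t ^ (3 : ℤ) * y ^ k) * t ^ (3 : ℤ) := by group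
    _ = t := by rw [cube_mul_zpow_eq h]; group

end Cube

section Word

variable {r s : G} (hr : r ^ (2 : ℤ) = 1)
  (hrs : r * s ^ m * (r * s ^ k * r * s ^ (m - k)) ^ 2 = 1)
include hr hrs

lemma word_sq_eq : (s ^ (m - k) * r * s ^ k * r) ^ 2 = s ^ (-k) * r * s ^ (k - m) :=
  calc (s ^ (m - k) * r * s ^ k * r) ^ 2
      = s ^ (-k) * r * (r ^ (2 : ℤ))⁻¹ * (r * s ^ m * (r * s ^ k * r * s ^ (m - k)) ^ 2) *
          s ^ (k - m) := by simp only [pow_two]; group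
    _ = s ^ (-k) * r * s ^ (k - m) := by rw [hrs, hr]; group

lemma word_zpow_three_eq : (s ^ (m - k) * r * s ^ k * r) ^ (3 : ℤ) = r :=
  calc (s ^ (m - k) * r * s ^ k * r) ^ (3 : ℤ)
      = (s ^ (m - k) * r * s ^ k * r) ^ 2 * (s ^ (m - k) * r * s ^ k * r) := by
        rw [← zpow_natCast, ← zpow_add_one]; rfl
    _ = s ^ (-k) * (r * r) * s ^ k * r := by rw [word_sq_eq hr hrs]; group
    _ = r := by rw [← zpow_two, hr]; group

lemma word_zpow_six_eq_one : (s ^ (m - k) * r * s ^ k * r) ^ (6 : ℤ) = 1 := by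
  rw [show (6 : ℤ) = 3 * 2 from rfl, zpow_mul, word_zpow_three_eq hr hrs, hr]

lemma word_relator_eq_one :
    s ^ (m - k) * (s ^ (m - k) * r * s ^ k * r) ^ (3 : ℤ) * s ^ k *
      (s ^ (m - k) * r * s ^ k * r) ^ (2 : ℤ) = 1 :=
  calc s ^ (m - k) * (s ^ (m - k) * r * s ^ k * r) ^ (3 : ℤ) * s ^ k *
        (s ^ (m - k) * r * s ^ k * r) ^ (2 : ℤ)
      = s ^ (m - k) * (r * r) * s ^ (k - m) := by
        rw [word_zpow_three_eq hr hrs, zpow_ofNat, word_sq_eq hr hrs]; group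
    _ = 1 := by rw [← zpow_two, hr]; group

end Word

end J6

open J6 in
/-- For all integers m, k, the group J₆(m,k) = ⟨t, y | t⁶, y^{m-k} t³ y^k t²⟩ is isomorphic
to ⟨R, S | R², R Sᵐ (R Sᵏ R S^{m-k})²⟩.
(Generators: `true ↦ t` resp. `R`, `false ↦ y` resp. `S`.) -/
theorem stmt_13 (m k : ℤ)
    (rels₁ rels₂ : Set (FreeGroup Bool))
    (h₁ : rels₁ = {FreeGroup.of true ^ (6 : ℤ),
      FreeGroup.of false ^ (m - k) * FreeGroup.of true ^ (3 : ℤ) *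
        FreeGroup.of false ^ k * FreeGroup.of true ^ (2 : ℤ)})
    (h₂ : rels₂ = {FreeGroup.of true ^ (2 : ℤ),
      FreeGroup.of true * FreeGroup.of false ^ m *
        (FreeGroup.of true * FreeGroup.of false ^ k *
          FreeGroup.of true * FreeGroup.of false ^ (m - k)) ^ 2}) :
    Nonempty (PresentedGroup rels₁ ≃* PresentedGroup rels₂) := by
  have h1 := fun w => PresentedGroup.lift_of_eq_one_of_mem (rels := rels₁) (r := w)
  have h2 := fun w => PresentedGroup.lift_of_eq_one_of_mem (rels := rels₂) (r := w)
  simp only [h₁, h₂, Set.mem_insert_iff, Set.mem_singleton_iff, forall_eq_or_imp, forall_eq,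
    map_mul, map_zpow, map_pow, FreeGroup.lift_apply_of] at h1 h2
  obtain ⟨ht, hty⟩ := h1
  obtain ⟨hr, hrs⟩ := h2
  refine ⟨PresentedGroup.mulEquivOfLiftInverse
    (fun b => cond b (.of false ^ (m - k) * .of true * .of false ^ k * .of true) (.of false))
    (fun b => cond b (.of true ^ (3 : ℤ)) (.of false)) ?_ ?_ ?_ ?_⟩ <;>
  simp only [h₁, h₂, Set.mem_insert_iff, Set.mem_singleton_iff, forall_eq_or_imp, forall_eq,
    Bool.forall_bool, map_mul, map_zpow, map_pow, FreeGroup.lift_apply_of,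
    PresentedGroup.toGroup.of, cond_true, cond_false, true_and]
  · exact ⟨word_zpow_six_eq_one hr hrs, word_relator_eq_one hr hrs⟩
  · exact ⟨by rw [← zpow_mul]; exact ht, cube_relator_eq_one hty⟩
  · exact word_of_cube_eq_self hty
  · exact word_zpow_three_eq hr hrs
end
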